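/- arXiv:1411.4063 — 9 statements merged into one kernel-verified Lean document; each statement's English description precedes it below -/
import Mathlib

section
/- Let P = ℂ[z_{αi}, w_i : 1 ≤ α ≤ n, 1 ≤ i ≤ k] with k ≥ n, and define q_α = Σ_{i=1}^k z_{αi} w_i for 1 ≤ α ≤ n. Then q₁,…,q_n is a regular sequence in P. -/
/-!
Let `q_α^s = ∑_{i ∈ s} z_{αi} w_i` be the forms restricted to a set `s` of columns. By induction
on `s`, `q_a^s` is regular modulo `(q_b^s)_{b < a}` whenever `a < |s|`. Adding a column `i` to
`s` gives `q_a = z_{ai} w_i + q_a^s`, and `z_{ai}` occurs in no other term involved, so as a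
polynomial in `z_{ai}` this is regular as soon as its leading coefficient `w_i` is. Setting
`w_i = 0` turns `(q_b)_{b < a}` into `(q_b^s)_{b < a}`, regular by induction; its syzygies are
therefore Koszul syzygies, and lifting one back shows that `w_i f ∈ (q_b)_{b < a}` forces
`f ∈ (q_b)_{b < a}`.
-/

open MvPolynomial

section KoszulSyzygies

variable {R ι : Type*} [CommRing R]

theorem Finset.sum_sum_mul_mul_eq_zero_of_alternating {c : ι → ι → R} (hcd : ∀ i, c i i = 0)
    (hca : ∀ i j, c i j = -c j i) (v : ι → R) (s : Finset ι) :
    ∑ i ∈ s, ∑ j ∈ s, c i j * v j * v i = 0 := by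
  rw [← Finset.sum_product']
  refine Finset.sum_involution (fun p _ => p.swap) (fun p _ => ?_) (fun p _ hne h => ?_)
    (fun p hp => Finset.mem_product.mpr (Finset.mem_product.mp hp).symm) (fun p _ => rfl)
  · simp only [Prod.fst_swap, Prod.snd_swap]
    linear_combination (v p.1 * v p.2) * hca p.1 p.2
  · obtain ⟨i, j⟩ := p
    obtain rfl : i = j := congrArg Prod.fst h.symm
    exact hne (by simp [hcd])

variable [LinearOrder ι]

def IsWeaklyRegularOn (r : ι → R) (s : Finset ι) : Prop :=
  ∀ i ∈ s, IsSMulRegular (R ⧸ Ideal.span (r '' (↑s ∩ Set.Iio i))) (r i)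

theorem IsWeaklyRegularOn.of_insert {r : ι → R} {a : ι} {t : Finset ι}
    (h : IsWeaklyRegularOn r (insert a t)) (hlt : ∀ x ∈ t, x < a) :
    IsWeaklyRegularOn r t ∧ IsSMulRegular (R ⧸ Ideal.span (r '' t)) (r a) := by
  have hcoe : ∀ i ≤ a, (↑(insert a t) ∩ Set.Iio i : Set ι) = ↑t ∩ Set.Iio i := fun i hi => by
    rw [Finset.coe_insert, Set.insert_inter_of_notMem (s := ↑t) (t := Set.Iio i) (not_lt.mpr hi)]
  refine ⟨fun i hi => ?_, ?_⟩
  · rw [← hcoe i (hlt i hi).le]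
    exact h i (Finset.mem_insert_of_mem hi)
  · have ha := h a (Finset.mem_insert_self a t)
    rwa [hcoe a le_rfl, Set.inter_eq_left.mpr (show (↑t : Set ι) ⊆ Set.Iio a from hlt)] at ha

theorem IsWeaklyRegularOn.exists_alternating_of_sum_mul_eq_zero {r : ι → R} {s : Finset ι}
    (hr : IsWeaklyRegularOn r s) {g : ι → R} (hg : ∑ i ∈ s, g i * r i = 0) :
    ∃ c : ι → ι → R, (∀ i, c i i = 0) ∧ (∀ i j, c i j = -c j i) ∧
      ∀ i ∈ s, g i = ∑ j ∈ s, c i j * r j := by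
  classical
  induction s using Finset.induction_on_max generalizing g with
  | empty => exact ⟨0, fun _ => rfl, fun _ _ => by simp, by simp⟩
  | insert a t hlt ih =>
    obtain ⟨hrt, hra⟩ := hr.of_insert hlt
    have hne : ∀ j ∈ t, j ≠ a := fun j hj => ne_of_lt (hlt j hj)
    rw [Finset.sum_insert fun h => hne a h rfl] at hg
    obtain ⟨d, hd⟩ : ∃ d : ι → R, ∑ j ∈ t, d j * r j = g a := by
      have hga : g a ∈ Ideal.span (r '' t) := by
        refine mem_of_isSMulRegular_quotient_of_smul_mem hra ?_
        rw [smul_eq_mul, mul_comm, eq_neg_of_add_eq_zero_left hg]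
        exact neg_mem (Ideal.sum_mem _ fun i hi =>
          Ideal.mul_mem_left _ _ (Ideal.subset_span ⟨i, hi, rfl⟩))
      simpa using (Submodule.mem_span_image_finset_iff_exists_fun' R).mp hga
    -- subtracting the Koszul syzygy with row `d` at `a` leaves a syzygy supported on `t`
    obtain ⟨c, hcd, hca, hcg⟩ := ih hrt (g := fun i => g i + d i * r a) (by
      simp only [add_mul, Finset.sum_add_distrib, mul_right_comm _ (r a), ← Finset.sum_mul, hd]
      linear_combination hg)
    refine ⟨fun i j => if i = a then (if j = a then 0 else d j) else if j = a then -d i else c i j,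
      fun i => by dsimp only; split_ifs <;> simp [hcd],
      fun i j => by dsimp only; split_ifs <;> first | exact hca i j | (subst_vars; simp), ?_⟩
    intro i hi
    rw [Finset.sum_insert fun h => hne a h rfl]
    rcases Finset.mem_insert.mp hi with rfl | hit
    · simp only [↓reduceIte, zero_mul, zero_add]
      rw [← hd]
      exact Finset.sum_congr rfl fun j hj => by simp [hne j hj]
    · simp only [hne i hit, ↓reduceIte]
      rw [Finset.sum_congr rfl (g := fun j => c i j * r j) fun j hj => by
        simp only [hne j hj, ↓reduceIte], ← hcg i hit]
      ring

theorem IsWeaklyRegularOn.isSMulRegular_quotient_of_retraction {v : ι → R} {s : Finset ι}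
    {w : R} (hw : IsLeftRegular w) (φ : R →+* R) (hφw : φ w = 0)
    (hφ : ∀ x, x - φ x ∈ Ideal.span {w}) (hv : IsWeaklyRegularOn (φ ∘ v) s) :
    IsSMulRegular (R ⧸ Ideal.span (v '' s)) w := by
  refine (isSMulRegular_quotient_iff_mem_of_smul_mem _ _).mpr fun f hf => ?_
  obtain ⟨g, hg⟩ := (Submodule.mem_span_image_finset_iff_exists_fun' R).mp hf
  simp only [smul_eq_mul] at hg
  have hsyz : ∑ i ∈ s, φ (g i) * (φ ∘ v) i = 0 := by
    simpa [hφw] using congrArg φ hg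
  obtain ⟨c, hcd, hca, hcg⟩ := hv.exists_alternating_of_sum_mul_eq_zero hsyz
  have hlift : ∀ i ∈ s, ∃ h, g i = ∑ j ∈ s, c i j * v j + w * h := by
    intro i hi
    have hmem : g i - ∑ j ∈ s, c i j * v j ∈ Ideal.span {w} := by
      have hsplit : g i - ∑ j ∈ s, c i j * v j
          = (g i - φ (g i)) - ∑ j ∈ s, c i j * (v j - φ (v j)) := by
        rw [hcg i hi]
        simp only [Function.comp_apply, mul_sub, Finset.sum_sub_distrib]
        ring
      rw [hsplit]
      exact sub_mem (hφ _) (Ideal.sum_mem _ fun j _ => Ideal.mul_mem_left _ _ (hφ _))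
    obtain ⟨h, hh⟩ := Ideal.mem_span_singleton'.mp hmem
    exact ⟨h, by rw [mul_comm, hh]; ring⟩
  choose! h hh using hlift
  have hwf : w * f = w * ∑ i ∈ s, h i * v i := by
    calc w * f = ∑ i ∈ s, (∑ j ∈ s, c i j * v j + w * h i) * v i := by
          rw [← hg]; exact Finset.sum_congr rfl fun i hi => by rw [← hh i hi]
      _ = ∑ i ∈ s, ∑ j ∈ s, c i j * v j * v i + w * ∑ i ∈ s, h i * v i := by
          simp only [add_mul, Finset.sum_add_distrib, Finset.sum_mul, Finset.mul_sum, mul_assoc]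
      _ = w * ∑ i ∈ s, h i * v i := by
          rw [Finset.sum_sum_mul_mul_eq_zero_of_alternating hcd hca, zero_add]
  rw [hw hwf]
  exact Ideal.sum_mem _ fun i hi => Ideal.mul_mem_left _ _ (Ideal.subset_span ⟨i, hi, rfl⟩)

end KoszulSyzygies

theorem RingEquiv.isSMulRegular_quotient_map_iff {A B : Type*} [CommRing A] [CommRing B]
    (e : A ≃+* B) (I : Ideal A) (x : A) :
    IsSMulRegular (B ⧸ I.map e) (e x) ↔ IsSMulRegular (A ⧸ I) x := by
  simp only [isSMulRegular_quotient_iff_mem_of_smul_mem, smul_eq_mul, e.surjective.forall,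
    ← map_mul, Ideal.apply_mem_of_equiv_iff]

namespace Polynomial

open nonZeroDivisors

variable {R : Type*} [CommRing R] {I : Ideal R} {w : R}

theorem isSMulRegular_quotient_of_map_C (hw : IsSMulRegular (R[X] ⧸ I.map C) (C w)) :
    IsSMulRegular (R ⧸ I) w := by
  refine (isSMulRegular_quotient_iff_mem_of_smul_mem _ _).mpr fun f hf => ?_
  have hC := mem_of_isSMulRegular_quotient_of_smul_mem hw (x := C f)
    (by rw [smul_eq_mul, ← map_mul]; exact Ideal.mem_map_of_mem _ hf)
  simpa using Ideal.mem_map_C_iff.mp hC 0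

theorem isSMulRegular_quotient_map_C_linear (hw : IsSMulRegular (R ⧸ I) w) (r : R) :
    IsSMulRegular (R[X] ⧸ I.map C) (C w * X + C r) := by
  refine (isSMulRegular_quotient_iff_mem_of_smul_mem _ _).mpr fun f hf => ?_
  rw [← Ideal.mk_ker (I := I), ← ker_mapRingHom, RingHom.mem_ker] at hf ⊢
  rw [smul_eq_mul, map_mul] at hf
  cases subsingleton_or_nontrivial (R ⧸ I)
  · exact Subsingleton.elim _ _
  have hw' : Ideal.Quotient.mk I w ∈ (R ⧸ I)⁰ :=
    mem_nonZeroDivisors_iff_left.mpr fun x hx =>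
      (isSMulRegular_iff_right_eq_zero_of_smul.mp hw) x (by
        rwa [Algebra.smul_def, Ideal.Quotient.algebraMap_eq])
  refine mem_nonZeroDivisors_iff_left.mp (mem_nonZeroDivisors_of_leadingCoeff ?_) _ hf
  simpa [leadingCoeff_linear (nonZeroDivisors.ne_zero hw')] using hw'

end Polynomial

namespace MvPolynomial

variable {R σ : Type*} [CommRing R]

theorem supported_compl_singleton_eq_range (u : σ) :
    supported R {u}ᶜ = (rename (Subtype.val : {v // v ≠ u} → σ)).range :=
  supported_eq_range_rename _

section EquivPolynomialIn

variable [DecidableEq σ]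

noncomputable def equivPolynomialIn (u : σ) :
    MvPolynomial σ R ≃ₐ[R] Polynomial (MvPolynomial {v // v ≠ u} R) :=
  (renameEquiv R (Equiv.optionSubtypeNe u).symm).trans (optionEquivLeft R _)

theorem equivPolynomialIn_X_self (u : σ) :
    equivPolynomialIn (R := R) u (X u) = Polynomial.X := by
  simp only [equivPolynomialIn, AlgEquiv.trans_apply, renameEquiv_apply, rename_X,
    Equiv.optionSubtypeNe_symm_self, optionEquivLeft_X_none]

theorem equivPolynomialIn_rename (u : σ) (p : MvPolynomial {v // v ≠ u} R) :
    equivPolynomialIn u (rename Subtype.val p) = Polynomial.C p := by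
  refine DFunLike.congr_fun (algHom_ext (f := (equivPolynomialIn (R := R) u : _ →ₐ[R] _).comp
    (rename Subtype.val)) (g := Polynomial.CAlgHom) fun v => ?_) p
  change equivPolynomialIn u (rename _ (X v)) = Polynomial.C (X v)
  simp only [equivPolynomialIn, rename_X, AlgEquiv.trans_apply, renameEquiv_apply,
    Equiv.optionSubtypeNe_symm_of_ne v.2, optionEquivLeft_X_some]

theorem map_equivPolynomialIn_span {u : σ} {G : Set (MvPolynomial σ R)}
    (hG : G ⊆ supported R {u}ᶜ) :
    (Ideal.span G).map (equivPolynomialIn u) =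
      (Ideal.span (rename Subtype.val ⁻¹' G)).map Polynomial.C := by
  have hGrange : G ⊆ Set.range (rename (R := R) (Subtype.val : {v // v ≠ u} → σ)) := by
    rw [← AlgHom.coe_range, ← supported_compl_singleton_eq_range]
    exact hG
  rw [Ideal.map_span, Ideal.map_span, ← Set.image_preimage_eq_of_subset hGrange, Set.image_image]
  simp only [equivPolynomialIn_rename,
    Set.preimage_image_eq _ (rename_injective _ Subtype.val_injective)]

end EquivPolynomialIn

theorem isSMulRegular_quotient_X_mul_add {u : σ} {G : Set (MvPolynomial σ R)}
    {w r : MvPolynomial σ R} (hG : G ⊆ supported R {u}ᶜ) (hw : w ∈ supported R {u}ᶜ)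
    (hr : r ∈ supported R {u}ᶜ) (hwG : IsSMulRegular (MvPolynomial σ R ⧸ Ideal.span G) w) :
    IsSMulRegular (MvPolynomial σ R ⧸ Ideal.span G) (X u * w + r) := by
  classical
  let e := (equivPolynomialIn (R := R) u).toRingEquiv
  have he : ∀ p, e (rename Subtype.val p) = Polynomial.C p := equivPolynomialIn_rename u
  obtain ⟨w, rfl⟩ := (AlgHom.mem_range _).mp (supported_compl_singleton_eq_range (R := R) u ▸ hw)
  obtain ⟨r, rfl⟩ := (AlgHom.mem_range _).mp (supported_compl_singleton_eq_range (R := R) u ▸ hr)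
  rw [← e.isSMulRegular_quotient_map_iff] at hwG ⊢
  have hmap : (Ideal.span G).map e = _ := map_equivPolynomialIn_span hG
  have hlin : e (X u * rename Subtype.val w + rename Subtype.val r) =
      Polynomial.C w * Polynomial.X + Polynomial.C r := by
    rw [map_add, map_mul, he, he, mul_comm]
    congr 2
    exact equivPolynomialIn_X_self u
  rw [hmap, he] at hwG
  rw [hmap, hlin]
  exact Polynomial.isSMulRegular_quotient_map_C_linear
    (Polynomial.isSMulRegular_quotient_of_map_C hwG) r

theorem sub_aeval_update_mem [DecidableEq σ] (v : σ) (x : MvPolynomial σ R) :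
    x - aeval (Function.update X v 0) x ∈ Ideal.span {X v} := by
  rw [← Ideal.Quotient.eq, ← Ideal.Quotient.mkₐ_eq_mk R, ← AlgHom.comp_apply]
  congr 1
  refine (algHom_ext fun u => ?_).symm
  rcases eq_or_ne u v with rfl | huv
  · simp
  · simp [huv]

end MvPolynomial

theorem RingTheory.Sequence.isRegular_ofFn {R : Type*} [CommRing R] {n : ℕ} {q : Fin n → R}
    (hq : ∀ a, IsSMulRegular (R ⧸ Ideal.span (q '' Set.Iio a)) (q a))
    (htop : Ideal.span (Set.range q) ≠ ⊤) :
    IsRegular R (List.ofFn q) := by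
  have hsmul : ∀ I : Ideal R, (I • ⊤ : Submodule R R) = I := fun I => by
    rw [Ideal.smul_eq_mul, Ideal.mul_top]
  refine ⟨⟨fun i hi => ?_⟩, ?_⟩
  · rw [List.length_ofFn] at hi
    have hprefix : {r | r ∈ (List.ofFn q).take i} = q '' Set.Iio ⟨i, hi⟩ := by
      ext x
      simp only [Set.mem_ofPred_eq, List.mem_take_iff_getElem, List.getElem_ofFn,
        List.length_ofFn, Set.mem_image, Set.mem_Iio, Fin.lt_def]
      constructor
      · rintro ⟨j, hj, rfl⟩
        exact ⟨⟨j, by omega⟩, hj.trans_le (min_le_left _ _), rfl⟩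
      · rintro ⟨j, hj, rfl⟩
        exact ⟨j, by omega, rfl⟩
    rw [hsmul, Ideal.ofList, hprefix]
    simpa using hq ⟨i, hi⟩
  · rw [hsmul, Ideal.ofList, ne_comm]
    convert htop using 2
    exact Set.ext fun x => List.mem_ofFn

section PartialForms

variable (R : Type*) [CommRing R] {κ : Type*} {n : ℕ}

noncomputable def zwSum (s : Finset κ) (α : Fin n) : MvPolynomial ((Fin n × κ) ⊕ κ) R :=
  ∑ i ∈ s, X (Sum.inl (α, i)) * X (Sum.inr i)

variable {R}

theorem zwSum_mem_supported {s : Finset κ} {a b : Fin n} {i : κ} (h : b ≠ a ∨ i ∉ s) :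
    zwSum R s b ∈ supported R {Sum.inl (a, i)}ᶜ := by
  -- `supported R t` unfolds to `adjoin R (X '' t)`; `X_mem_supported` would need `Nontrivial R`
  refine Subalgebra.sum_mem _ fun j hj => Subalgebra.mul_mem _
    (Algebra.subset_adjoin ⟨_, ?_, rfl⟩) (Algebra.subset_adjoin ⟨_, by simp, rfl⟩)
  simp only [Set.mem_compl_iff, Set.mem_singleton_iff, Sum.inl.injEq, Prod.mk.injEq, not_and]
  rintro rfl rfl
  tauto

variable [DecidableEq κ]

theorem zwSum_insert {s : Finset κ} {i : κ} (hi : i ∉ s) (α : Fin n) :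
    zwSum R (insert i s) α = X (Sum.inl (α, i)) * X (Sum.inr i) + zwSum R s α :=
  Finset.sum_insert hi

theorem aeval_update_zwSum_insert {s : Finset κ} {i : κ} (hi : i ∉ s) (α : Fin n) :
    aeval (Function.update X (Sum.inr i) 0) (zwSum R (insert i s) α) = zwSum R s α := by
  rw [zwSum_insert hi, zwSum, map_add, map_sum]
  simp only [map_mul, aeval_X, Function.update_self, mul_zero, zero_add]
  refine Finset.sum_congr rfl fun j hj => ?_
  rw [Function.update_of_ne (by simp),
    Function.update_of_ne (by simpa using ne_of_mem_of_not_mem hj hi)]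

theorem isSMulRegular_X_inr_quotient_zwSum {s : Finset κ} {i : κ} (hi : i ∉ s) {a : Fin n}
    (ih : ∀ b < a, IsSMulRegular (MvPolynomial ((Fin n × κ) ⊕ κ) R ⧸
      Ideal.span (zwSum R s '' Set.Iio b)) (zwSum R s b)) :
    IsSMulRegular (MvPolynomial ((Fin n × κ) ⊕ κ) R ⧸
      Ideal.span (zwSum R (insert i s) '' Set.Iio a))
      (X (Sum.inr i) : MvPolynomial ((Fin n × κ) ⊕ κ) R) := by
  have hφ : (aeval (Function.update X (Sum.inr i) 0)).toRingHom ∘ zwSum R (insert i s) =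
      zwSum R (n := n) s :=
    funext (aeval_update_zwSum_insert hi)
  rw [← Finset.coe_Iio]
  refine IsWeaklyRegularOn.isSMulRegular_quotient_of_retraction (isRegular_X (R := R)).left
    (aeval (Function.update X (Sum.inr i) 0)).toRingHom (by simp) (sub_aeval_update_mem _) ?_
  intro b hb
  rw [hφ, Finset.coe_Iio, Set.Iio_inter_Iio, min_eq_right (Finset.mem_Iio.mp hb).le]
  exact ih b (Finset.mem_Iio.mp hb)

theorem isSMulRegular_quotient_zwSum (s : Finset κ) (a : Fin n) (ha : (a : ℕ) < s.card) :
    IsSMulRegular (MvPolynomial ((Fin n × κ) ⊕ κ) R ⧸ Ideal.span (zwSum R s '' Set.Iio a))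
      (zwSum R s a) := by
  induction s using Finset.induction_on generalizing a with
  | empty => simp at ha
  | insert i s hi ih =>
    rw [Finset.card_insert_of_notMem hi, Nat.lt_succ_iff] at ha
    have hw := isSMulRegular_X_inr_quotient_zwSum (a := a) hi fun b hb =>
      ih b ((Fin.lt_def.mp hb).trans_le ha)
    rw [zwSum_insert hi]
    refine isSMulRegular_quotient_X_mul_add ?_ (Algebra.subset_adjoin ⟨_, by simp, rfl⟩)
      (zwSum_mem_supported (Or.inr hi)) hw
    rintro _ ⟨b, hb, rfl⟩
    exact zwSum_mem_supported (Or.inl (ne_of_lt hb))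

end PartialForms

/-- Let `P = ℂ[z_{αi}, w_i : 1 ≤ α ≤ n, 1 ≤ i ≤ k]` (the `z`-variables indexed by
`Sum.inl (α, i)` and the `w`-variables by `Sum.inr i`), with `k ≥ n`, and let
`q_α = Σ_{i=1}^k z_{αi} w_i`.  Then `q₁, …, q_n` is a regular sequence in `P`. -/
theorem regular_sequence_q (n k : ℕ) (hk : n ≤ k) :
    RingTheory.Sequence.IsRegular (MvPolynomial ((Fin n × Fin k) ⊕ Fin k) ℂ)
      (List.ofFn fun α : Fin n =>
        (∑ i : Fin k, X (Sum.inl (α, i)) * X (Sum.inr i) :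
          MvPolynomial ((Fin n × Fin k) ⊕ Fin k) ℂ)) := by
  refine RingTheory.Sequence.isRegular_ofFn (fun a => ?_) ?_
  · exact isSMulRegular_quotient_zwSum Finset.univ a (by simpa using a.2.trans_le hk)
  · refine ne_top_of_le_ne_top (RingHom.ker_ne_top (constantCoeff (R := ℂ))) ?_
    rw [Ideal.span_le]
    rintro _ ⟨α, rfl⟩
    simp
end

section
/- Let S = ℂ[r_{ij}, w_i : 1 ≤ i ≤ j ≤ k] (with r_{ij} = r_{ji} as indeterminates) and define the cubic polynomials c_j = Σ_{i=1}^k r_{ij} w_i for 1 ≤ j ≤ k. Then c₁,…,c_k is a regular sequence in S. -/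
/-!
Write `c_m = w_m r_{mm} + b_m`, where neither `w_m` nor `b_m` involves `r_{mm}`. Modulo an
ideal generated by polynomials free of a variable `y`, `u y + b` is a nonzerodivisor as soon as
`u` is (for `u, b` free of `y`): compare coefficients of powers of `y`, descending from the top
degree. Hence `c_m` is regular modulo `(c_l : l ∈ L)`, `m ∉ L`, once `w_m` is. That `w_i` is
regular modulo `(c_l : l ∈ L) + (w_t : t ∈ T)` (for disjoint `L`, `T` not containing `i`)
follows by induction on `L` from the exchange rule: if `x` is regular modulo `I` and `y` modulo
`I + (x)`, then `x` is regular modulo `I + (y)`. Finally the `c_j` vanish at the origin, so they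
generate a proper ideal.
-/

theorem isSMulRegular_quotient_iff_mul_mem {R : Type*} [CommRing R] {I : Ideal R} {x : R} :
    IsSMulRegular (R ⧸ I) x ↔ ∀ f, x * f ∈ I → f ∈ I :=
  isSMulRegular_quotient_iff_mem_of_smul_mem I x

theorem isSMulRegular_quotient_span_singleton_sup {R : Type*} [CommRing R] {I : Ideal R}
    {x y : R} (hx : IsSMulRegular (R ⧸ I) x)
    (hy : IsSMulRegular (R ⧸ Ideal.span {x} ⊔ I) y) :
    IsSMulRegular (R ⧸ Ideal.span {y} ⊔ I) x := by
  rw [isSMulRegular_quotient_iff_mul_mem] at hx hy ⊢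
  intro f hf
  obtain ⟨g, a, ha, hxf⟩ := Ideal.mem_span_singleton_sup.1 hf
  have hg : g ∈ Ideal.span {x} ⊔ I := hy g <| Ideal.mem_span_singleton_sup.2
    ⟨f, -a, I.neg_mem ha, by linear_combination -hxf⟩
  obtain ⟨h, a', ha', rfl⟩ := Ideal.mem_span_singleton_sup.1 hg
  have hfh : f - h * y ∈ I := hx _ <| by
    rw [show x * (f - h * y) = y * a' + a by linear_combination -hxf]
    exact I.add_mem (I.mul_mem_left y ha') ha
  exact Ideal.mem_span_singleton_sup.2 ⟨h, _, hfh, by ring⟩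

theorem isSMulRegular_quotient_map_ringEquiv_iff {S P : Type*} [CommRing S] [CommRing P]
    (e : S ≃+* P) (I : Ideal S) (p : S) :
    IsSMulRegular (P ⧸ I.map e) (e p) ↔ IsSMulRegular (S ⧸ I) p := by
  simp only [isSMulRegular_quotient_iff_mul_mem, e.surjective.forall, ← map_mul,
    Ideal.mem_map_of_equiv, e.injective.eq_iff, exists_eq_right]

open Polynomial in
theorem Polynomial.isSMulRegular_C_mul_X_add_C {A : Type*} [CommRing A] {K : Ideal A} {u : A}
    (b : A) (hu : IsSMulRegular (A[X] ⧸ K.map C) (C u)) :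
    IsSMulRegular (A[X] ⧸ K.map C) (C u * X + C b) := by
  rw [isSMulRegular_quotient_iff_mul_mem] at hu ⊢
  have hu₀ (q : A) (hq : u * q ∈ K) : q ∈ K := by
    simpa using Ideal.mem_map_C_iff.1
      (hu (C q) (by rw [← C_mul]; exact Ideal.mem_map_of_mem _ hq)) 0
  intro f hf
  rw [Ideal.mem_map_C_iff] at hf ⊢
  have hcoeff (n : ℕ) : u * f.coeff n + b * f.coeff (n + 1) ∈ K := by
    simpa only [add_mul, coeff_add, mul_assoc, coeff_C_mul, coeff_X_mul] using hf (n + 1)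
  have hcoeff_mem (j n : ℕ) (hn : f.natDegree < n + j) : f.coeff n ∈ K := by
    induction j generalizing n with
    | zero => simp [coeff_eq_zero_of_natDegree_lt (n := n) (by omega)]
    | succ j ih =>
      refine hu₀ _ ?_
      simpa using K.sub_mem (hcoeff n) (K.mul_mem_left b (ih (n + 1) (by omega)))
  exact fun n => hcoeff_mem (f.natDegree + 1) n (by omega)

namespace MvPolynomial

theorem isSMulRegular_mul_X_add {σ R : Type*} [CommRing R] {y : σ}
    {G : Set (MvPolynomial σ R)} (hG : G ⊆ supported R {y}ᶜ) {u b : MvPolynomial σ R}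
    (hu : u ∈ supported R {y}ᶜ) (hb : b ∈ supported R {y}ᶜ)
    (h : IsSMulRegular (MvPolynomial σ R ⧸ Ideal.span G) u) :
    IsSMulRegular (MvPolynomial σ R ⧸ Ideal.span G) (u * X y + b) := by
  classical
  let ι : MvPolynomial {t // t ≠ y} R →ₐ[R] MvPolynomial σ R := rename Subtype.val
  let e : MvPolynomial σ R ≃ₐ[R] Polynomial (MvPolynomial {t // t ≠ y} R) :=
    (renameEquiv R (Equiv.optionSubtypeNe y).symm).trans (optionEquivLeft R _)
  have he : (e : MvPolynomial σ R →ₐ[R] _).comp ι = Polynomial.CAlgHom := by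
    refine algHom_ext fun i => ?_
    simp [e, ι, Equiv.optionSubtypeNe_symm_of_ne i.2]
  have hey : e (X y) = Polynomial.X := by simp [e]
  have hι : (supported R {y}ᶜ : Set (MvPolynomial σ R)) ⊆ Set.range ι := fun p hp =>
    exists_rename_eq_of_vars_subset_range p _ Subtype.val_injective (by
      simpa [Set.subset_def] using mem_supported.1 hp)
  obtain ⟨G₀, rfl⟩ := Set.subset_range_iff_exists_image_eq.1 (hG.trans hι)
  obtain ⟨u₀, rfl⟩ := hι hu
  obtain ⟨b₀, rfl⟩ := hι hb
  have heι (q) : e (ι q) = Polynomial.C q := AlgHom.congr_fun he q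
  have hmap : (Ideal.span (ι '' G₀)).map e.toRingEquiv = (Ideal.span G₀).map Polynomial.C := by
    rw [Ideal.map_span, Ideal.map_span, ← Set.image_comp]
    congr 1
    exact Set.image_congr fun q _ => heι q
  rw [← isSMulRegular_quotient_map_ringEquiv_iff e.toRingEquiv, hmap] at h ⊢
  simp only [AlgEquiv.coe_ringEquiv, map_add, map_mul, heι, hey] at h ⊢
  exact Polynomial.isSMulRegular_C_mul_X_add_C b₀ h

end MvPolynomial

theorem Ideal.ofList_take_ofFn {R : Type*} [CommRing R] {k : ℕ} (f : Fin k → R) (n : ℕ) :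
    Ideal.ofList ((List.ofFn f).take n) = Ideal.span (f '' {j | j.val < n}) := by
  rw [Ideal.ofList]
  congr 1
  ext x
  simp only [Set.mem_ofPred_eq, List.mem_iff_getElem, List.length_take, List.length_ofFn,
    List.getElem_take, List.getElem_ofFn, Set.mem_image]
  constructor
  · rintro ⟨m, hm, rfl⟩
    exact ⟨⟨m, by omega⟩, by simp; omega, rfl⟩
  · rintro ⟨j, hj, rfl⟩
    exact ⟨j, by omega, rfl⟩

namespace GenericSymmMulVec

open MvPolynomial

variable (R : Type*) [CommRing R] {k : ℕ}

noncomputable def w (i : Fin k) : MvPolynomial (Sym2 (Fin k) ⊕ Fin k) R := X (Sum.inr i)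

noncomputable def c (j : Fin k) : MvPolynomial (Sym2 (Fin k) ⊕ Fin k) R :=
  ∑ i, X (Sum.inl s(i, j)) * w R i

theorem c_eq_w_mul_X_add (m : Fin k) :
    c R m = w R m * X (Sum.inl s(m, m)) +
      ∑ i ∈ Finset.univ.erase m, X (Sum.inl s(i, m)) * w R i := by
  rw [c, ← Finset.add_sum_erase _ _ (Finset.mem_univ m), mul_comm]

variable {R} [Nontrivial R]

theorem w_mem_supported (i : Fin k) (m : Fin k) :
    w R i ∈ supported R {Sum.inl s(m, m)}ᶜ :=
  X_mem_supported.2 Sum.inr_ne_inl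

theorem X_inl_mem_supported {i j m : Fin k} (h : i ≠ m ∨ j ≠ m) :
    (X (Sum.inl s(i, j)) : MvPolynomial (Sym2 (Fin k) ⊕ Fin k) R) ∈
      supported R {Sum.inl s(m, m)}ᶜ :=
  X_mem_supported.2 <| by
    simp only [Set.mem_compl_singleton_iff, ne_eq, Sum.inl.injEq, Sym2.eq_iff]
    tauto

theorem isSMulRegular_c_of_isSMulRegular_w {L T : Finset (Fin k)} {m : Fin k}
    (hm : m ∉ L) (h : IsSMulRegular
      (MvPolynomial (Sym2 (Fin k) ⊕ Fin k) R ⧸ Ideal.span (c R '' L ∪ w R '' T)) (w R m)) :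
    IsSMulRegular (MvPolynomial (Sym2 (Fin k) ⊕ Fin k) R ⧸ Ideal.span (c R '' L ∪ w R '' T))
      (c R m) := by
  rw [c_eq_w_mul_X_add]
  refine isSMulRegular_mul_X_add ?_ (w_mem_supported m m) ?_ h
  · rintro _ (⟨l, hl, rfl⟩ | ⟨t, -, rfl⟩)
    · have hlm : l ≠ m := ne_of_mem_of_not_mem hl hm
      exact Subalgebra.sum_mem _ fun i _ =>
        mul_mem (X_inl_mem_supported (Or.inr hlm)) (w_mem_supported i m)
    · exact w_mem_supported t m
  · exact Subalgebra.sum_mem _ fun i hi =>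
      mul_mem (X_inl_mem_supported (Or.inl (Finset.ne_of_mem_erase hi))) (w_mem_supported i m)

theorem isSMulRegular_w {L T : Finset (Fin k)} (hLT : Disjoint L T) {i : Fin k} (hiL : i ∉ L)
    (hiT : i ∉ T) :
    IsSMulRegular (MvPolynomial (Sym2 (Fin k) ⊕ Fin k) R ⧸ Ideal.span (c R '' L ∪ w R '' T))
      (w R i) := by
  induction L using Finset.induction_on generalizing T i with
  | empty =>
    rw [show w R i = 1 * X (Sum.inr i) + 0 by simp [w]]
    refine isSMulRegular_mul_X_add ?_ (one_mem _) (zero_mem _) (.one _)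
    rintro _ (⟨l, hl, -⟩ | ⟨t, ht, rfl⟩)
    · simp at hl
    · exact X_mem_supported.2 (by simpa using ne_of_mem_of_not_mem ht hiT)
  | insert m L hm ih =>
    obtain ⟨hmT, hLT⟩ := Finset.disjoint_insert_left.1 hLT
    obtain ⟨him, hiL⟩ := not_or.1 (Finset.mem_insert.not.1 hiL)
    rw [Finset.coe_insert, Set.image_insert_eq, Set.insert_union, Ideal.span_insert]
    refine isSMulRegular_quotient_span_singleton_sup (ih hLT hiL hiT) ?_
    rw [← Ideal.span_insert, ← Set.union_insert, ← Set.image_insert_eq, ← Finset.coe_insert]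
    exact isSMulRegular_c_of_isSMulRegular_w hm
      (ih (Finset.disjoint_insert_right.2 ⟨hiL, hLT⟩) hm (by simp [Ne.symm him, hmT]))

variable (R) (k)

theorem isRegular_ofFn_c :
    RingTheory.Sequence.IsRegular (MvPolynomial (Sym2 (Fin k) ⊕ Fin k) R)
      (List.ofFn fun j : Fin k => c R j) := by
  refine ⟨(RingTheory.Sequence.isWeaklyRegular_iff _ _).2 fun n hn => ?_, ?_⟩
  · replace hn : n < k := by simpa using hn
    rw [Ideal.smul_eq_mul, Ideal.mul_top, Ideal.ofList_take_ofFn, List.getElem_ofFn]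
    let L := Finset.univ.filter fun j : Fin k => j.val < n
    have hL : {j : Fin k | j.val < n} = L := by simp [L]
    have hnL : (⟨n, hn⟩ : Fin k) ∉ L := by simp [L]
    have := isSMulRegular_c_of_isSMulRegular_w (R := R) (T := ∅) hnL
      (isSMulRegular_w (by simp) hnL (by simp))
    rw [Finset.coe_empty, Set.image_empty, Set.union_empty] at this
    rwa [hL]
  · rw [Ideal.smul_eq_mul, Ideal.mul_top]
    refine (ne_top_of_le_ne_top (RingHom.ker_ne_top constantCoeff) ?_).symm
    rw [Ideal.ofList, Ideal.span_le]
    intro x hx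
    obtain ⟨j, rfl⟩ := List.mem_ofFn.1 hx
    simp [c, w]

end GenericSymmMulVec

open MvPolynomial

/-- Let `S = ℂ[r_{ij}, w_i]` where the `r_{ij}` are symmetric indeterminates
(indexed by unordered pairs `Sym2 (Fin k)`, so that `r_{ij} = r_{ji}`) and
`w₁, …, w_k` are further indeterminates, and let `c_j = Σ_{i=1}^k r_{ij} w_i`.
Then `c₁, …, c_k` is a regular sequence in `S`. -/
theorem regular_sequence_c (k : ℕ) :
    RingTheory.Sequence.IsRegular (MvPolynomial (Sym2 (Fin k) ⊕ Fin k) ℂ)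
      (List.ofFn fun j : Fin k =>
        (∑ i : Fin k, X (Sum.inl s(i, j)) * X (Sum.inr i) :
          MvPolynomial (Sym2 (Fin k) ⊕ Fin k) ℂ)) :=
  GenericSymmMulVec.isRegular_ofFn_c ℂ k
end

section
/- If R is a Noetherian graded commutative ring and a₁,…,a_n is a regular sequence of homogeneous elements of positive degree in R, then any permutation of a₁,…,a_n is also a regular sequence. -/
/-!
Permutations are generated by adjacent transpositions, and swapping two adjacent elements `a, b`
of a weakly regular sequence reduces (`IsWeaklyRegular.prototype_perm`) to showing: if `I` is the
ideal of the preceding elements and the `b`-torsion `K` of `R ⧸ I` satisfies `K = a • K`, then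
`K = 0`. Lifting `K` to `J = (I : b)` turns `K = a • K` into `J ≤ I + aJ`. All of `I`, `J` are
homogeneous, and a homogeneous element of `J` of degree `e` is then in `I` plus `a` times elements
of `J` of degree `e - deg a < e`; induction on the degree gives `J ≤ I`, i.e. `K = 0`.
-/

open DirectSum Pointwise

namespace Ideal

variable {R : Type*} [CommRing R] (𝒜 : ℕ → AddSubmonoid R) [GradedRing 𝒜]

theorem IsHomogeneous.le_of_le_sup_span_singleton_mul {I J : Ideal R}
    (hI : I.IsHomogeneous 𝒜) (hJ : J.IsHomogeneous 𝒜) {a : R} {d : ℕ} (hd : 0 < d)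
    (ha : a ∈ 𝒜 d) (h : J ≤ I ⊔ span {a} * J) : J ≤ I := by
  have homogeneous_mem : ∀ e, ∀ x ∈ J, x ∈ 𝒜 e → x ∈ I := by
    intro e
    induction e using Nat.strong_induction_on with
    | _ e ih =>
      intro x hxJ hxe
      obtain ⟨i, hi, z, hz, rfl⟩ := Submodule.mem_sup.mp (h hxJ)
      obtain ⟨w, hwJ, rfl⟩ := mem_span_singleton_mul.mp hz
      rw [← decompose_of_mem_same 𝒜 hxe, decompose_add, DirectSum.add_apply, AddMemClass.coe_add]
      refine I.add_mem (hI e hi) ?_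
      by_cases hde : d ≤ e
      · rw [coe_decompose_mul_of_left_mem_of_le 𝒜 ha hde]
        exact I.mul_mem_left a <| ih (e - d) (by omega) _ (hJ _ hwJ) (SetLike.coe_mem _)
      · rw [coe_decompose_mul_of_left_mem_of_not_le 𝒜 ha hde]
        exact I.zero_mem
  classical
  intro x hx
  rw [← sum_support_decompose 𝒜 x]
  exact I.sum_mem fun e _ => homogeneous_mem e _ (hJ e hx) (SetLike.coe_mem _)

theorem IsHomogeneous.colon_span_singleton {I : Ideal R} (hI : I.IsHomogeneous 𝒜)
    {c : R} {d : ℕ} (hc : c ∈ 𝒜 d) : (I.colon (span {c})).IsHomogeneous 𝒜 := by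
  intro e x hx
  rw [mem_colon_span_singleton] at hx ⊢
  have := hI (e + d) hx
  rwa [coe_decompose_mul_of_right_mem_of_le 𝒜 hc (Nat.le_add_left d e),
    Nat.add_sub_cancel] at this

end Ideal

namespace Submodule

theorem comap_mkQ_le_iff_eq_bot {R M : Type*} [Ring R] [AddCommGroup M] [Module R M]
    {p : Submodule R M} {N : Submodule R (M ⧸ p)} : N.comap p.mkQ ≤ p ↔ N = ⊥ := by
  rw [← le_bot_iff, ← comap_le_comap_iff_of_surjective p.mkQ_surjective, comap_bot, ker_mkQ]

variable {R : Type*} [CommRing R] {I : Ideal R}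

theorem comap_mkQ_torsionBy (c : R) :
    (torsionBy R (R ⧸ I) c).comap I.mkQ = I.colon (Ideal.span {c}) := by
  ext x
  rw [mem_comap, mem_torsionBy_iff, Ideal.mem_colon_span_singleton, mkQ_apply,
    ← Quotient.mk_smul, Quotient.mk_eq_zero, smul_eq_mul, mul_comm]

theorem comap_mkQ_le_sup_span_singleton_mul {N : Submodule R (R ⧸ I)} {a : R}
    (h : N ≤ a • N) : N.comap I.mkQ ≤ I ⊔ Ideal.span {a} * N.comap I.mkQ := by
  intro x hx
  obtain ⟨k, hk, hak⟩ := (mem_smul_pointwise_iff_exists _ _ _).mp (h hx)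
  obtain ⟨y, rfl⟩ := I.mkQ_surjective k
  have hxy : x - a * y ∈ I := by
    rw [← Quotient.mk_eq_zero, Quotient.mk_sub, sub_eq_zero]
    exact hak.symm
  rw [← sub_add_cancel x (a * y)]
  exact add_mem_sup hxy (Ideal.mul_mem_mul (Ideal.mem_span_singleton_self a) hk)

end Submodule

namespace RingTheory.Sequence

variable {R : Type*} [CommRing R] (𝒜 : ℕ → AddSubmonoid R) [GradedRing 𝒜]

theorem IsWeaklyRegular.of_perm_of_homogeneous_pos {rs rs' : List R}
    (h1 : IsWeaklyRegular R rs) (h2 : rs.Perm rs') (h3 : ∀ r ∈ rs, ∃ d, 0 < d ∧ r ∈ 𝒜 d) :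
    IsWeaklyRegular R rs' := by
  refine h1.prototype_perm h2 fun a b rs₀ hsub hK => ?_
  have h3' : ∀ r ∈ a :: b :: rs₀, ∃ d, 0 < d ∧ r ∈ 𝒜 d := fun r hr => h3 r (hsub.subset hr)
  obtain ⟨da, hda, ha⟩ := h3' a (by simp)
  obtain ⟨db, -, hb⟩ := h3' b (by simp)
  have hI : (Ideal.ofList rs₀ • ⊤ : Ideal R).IsHomogeneous 𝒜 := by
    rw [Ideal.smul_eq_mul, Ideal.mul_top]
    refine Ideal.homogeneous_span 𝒜 _ fun r hr => ?_
    obtain ⟨d, -, hd⟩ := h3' r (by simp_all)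
    exact ⟨d, hd⟩
  rw [← Submodule.comap_mkQ_le_iff_eq_bot, Submodule.comap_mkQ_torsionBy]
  refine hI.le_of_le_sup_span_singleton_mul 𝒜 (hI.colon_span_singleton 𝒜 hb) hda ha ?_
  rw [← Submodule.comap_mkQ_torsionBy]
  exact Submodule.comap_mkQ_le_sup_span_singleton_mul hK.le

theorem IsRegular.of_perm_of_homogeneous_pos {rs rs' : List R}
    (h1 : IsRegular R rs) (h2 : rs.Perm rs') (h3 : ∀ r ∈ rs, ∃ d, 0 < d ∧ r ∈ 𝒜 d) :
    IsRegular R rs' :=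
  ⟨h1.toIsWeaklyRegular.of_perm_of_homogeneous_pos 𝒜 h2 h3,
    h1.top_ne_smul.trans_eq (congrArg (Ideal.span · • ⊤) (Set.ext fun _ => h2.mem_iff))⟩

end RingTheory.Sequence

theorem regular_sequence_permute_general {R : Type*} [CommRing R]
    (𝒜 : ℕ → AddSubmonoid R) [GradedRing 𝒜] {n : ℕ} (a : Fin n → R)
    (hhom : ∀ i, ∃ d : ℕ, 0 < d ∧ a i ∈ 𝒜 d)
    (hreg : RingTheory.Sequence.IsRegular R (List.ofFn a))
    (σ : Equiv.Perm (Fin n)) :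
    RingTheory.Sequence.IsRegular R (List.ofFn (a ∘ σ)) :=
  hreg.of_perm_of_homogeneous_pos 𝒜 (σ.ofFn_comp_perm a).symm <| by
    simpa only [List.forall_mem_ofFn_iff] using hhom

/-- If `R` is a Noetherian `ℕ`-graded commutative ring and `a₁, …, a_n` is a regular
sequence of homogeneous elements of positive degree in `R`, then any permutation of
`a₁, …, a_n` is again a regular sequence. -/
theorem regular_sequence_permute {R : Type*} [CommRing R] [IsNoetherianRing R]
    (𝒜 : ℕ → AddSubmonoid R) [GradedRing 𝒜] {n : ℕ} (a : Fin n → R)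
    (hhom : ∀ i, ∃ d : ℕ, 0 < d ∧ a i ∈ 𝒜 d)
    (hreg : RingTheory.Sequence.IsRegular R (List.ofFn a))
    (σ : Equiv.Perm (Fin n)) :
    RingTheory.Sequence.IsRegular R (List.ofFn (a ∘ σ)) :=
  regular_sequence_permute_general 𝒜 a hhom hreg σ
end

section
/- Let Z = (z_{αi}) be an n × k matrix of indeterminates over ℂ, and for strictly increasing index tuples I ⊆ {1,…,n}, J ⊆ {1,…,k} each of size ℓ, let f_{I,J}(Z) denote the ℓ × ℓ minor of Z with rows I and columns J. Then f_{I,J} is annihilated by each of the operators Δ_{ij} = Σ_{α=1}^n ∂²/(∂z_{αi} ∂z_{αj}) for all 1 ≤ i, j ≤ k. -/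
/-!
Expanding the determinant, every term is a product of variables taken from distinct rows of `Z`,
so it has degree at most one in the variables `z_{α1}, …, z_{αk}` of any fixed row `α`; each
summand of `Δ_{ij}` differentiates twice within one row and therefore kills it.
-/

open MvPolynomial

variable {R σ ι : Type*}

section CommSemiring

variable [CommSemiring R]

theorem pderiv_prod_X_eq_zero {s : Finset ι} {v : ι → σ} {x : σ} (h : ∀ b ∈ s, v b ≠ x) :
    pderiv x (∏ b ∈ s, (X (v b) : MvPolynomial σ R)) = 0 := by
  induction s using Finset.cons_induction with
  | empty => simp
  | cons a s ha ih =>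
    rw [Finset.forall_mem_cons] at h
    rw [Finset.prod_cons, Derivation.leibniz, pderiv_X_of_ne h.1, ih h.2, smul_zero, smul_zero,
      add_zero]

theorem pderiv_pderiv_X_eq_zero (x y z : σ) : pderiv x (pderiv y (X z : MvPolynomial σ R)) = 0 := by
  classical
  by_cases h : z = y <;> simp [h]

theorem pderiv_pderiv_prod_X_eq_zero {s : Finset ι} {v : ι → σ} {S : Set σ}
    (hS : ∀ b ∈ s, ∀ c ∈ s, v b ∈ S → v c ∈ S → b = c) {x y : σ} (hx : x ∈ S) (hy : y ∈ S) :
    pderiv x (pderiv y (∏ b ∈ s, (X (v b) : MvPolynomial σ R))) = 0 := by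
  induction s using Finset.cons_induction with
  | empty => simp
  | cons a s ha ih =>
    by_cases hva : v a ∈ S
    · have hne : ∀ {z}, z ∈ S → ∀ c ∈ s, v c ≠ z := fun hz c hc hvc =>
        ha (hS a (Finset.mem_cons_self a s) c (Finset.mem_cons_of_mem hc) hva (hvc ▸ hz) ▸ hc)
      simp [Derivation.leibniz, pderiv_pderiv_X_eq_zero, pderiv_prod_X_eq_zero (hne hx),
        pderiv_prod_X_eq_zero (hne hy)]
    · have ih := ih fun b hb c hc =>
        hS b (Finset.mem_cons_of_mem hb) c (Finset.mem_cons_of_mem hc)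
      simp [Derivation.leibniz, ih,
        pderiv_X_of_ne (ne_of_mem_of_not_mem hx hva).symm,
        pderiv_X_of_ne (ne_of_mem_of_not_mem hy hva).symm]

end CommSemiring

theorem pderiv_pderiv_det_X_eq_zero [CommRing R] {m : Type*} [Fintype m] [DecidableEq m]
    (v : m → m → σ) {S : Set σ} (hS : ∀ a a' b b', v a b ∈ S → v a' b' ∈ S → a = a')
    {x y : σ} (hx : x ∈ S) (hy : y ∈ S) :
    pderiv x (pderiv y (Matrix.det (Matrix.of fun a b => (X (v a b) : MvPolynomial σ R)))) = 0 := by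
  rw [Matrix.det_apply]
  simp only [map_sum, Derivation.map_smul_of_tower, Matrix.of_apply]
  refine Finset.sum_eq_zero fun τ _ => ?_
  rw [pderiv_pderiv_prod_X_eq_zero (fun b _ c _ hb hc => τ.injective (hS _ _ _ _ hb hc)) hx hy,
    smul_zero]

theorem minor_is_harmonic_general (n k ℓ : ℕ) (I : Fin ℓ → Fin n) (J : Fin ℓ → Fin k)
    (hI : StrictMono I) (i j : Fin k) :
    (∑ α : Fin n,
        pderiv (α, i) (pderiv (α, j)
          (Matrix.det (Matrix.of fun a b : Fin ℓ =>
            (X (I a, J b) : MvPolynomial (Fin n × Fin k) ℂ))))) = 0 :=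
  Finset.sum_eq_zero fun α _ =>
    pderiv_pderiv_det_X_eq_zero (fun a b => (I a, J b)) (S := {p | p.1 = α})
      (fun _ _ _ _ ha ha' => hI.injective (ha.trans ha'.symm)) rfl rfl

/-- Let `Z = (z_{αi})` be an `n × k` matrix of indeterminates over `ℂ`, and for strictly
increasing tuples `I : Fin ℓ → Fin n` and `J : Fin ℓ → Fin k` let `f_{I,J}` be the
`ℓ × ℓ` minor of `Z` with rows `I` and columns `J`.  Then `f_{I,J}` is annihilated by
every operator `Δ_{ij} = Σ_{α=1}^n ∂²/(∂z_{αi} ∂z_{αj})`, i.e. it is harmonic. -/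
theorem minor_is_harmonic (n k ℓ : ℕ) (I : Fin ℓ → Fin n) (J : Fin ℓ → Fin k)
    (hI : StrictMono I) (hJ : StrictMono J) (i j : Fin k) :
    (∑ α : Fin n,
        pderiv (α, i) (pderiv (α, j)
          (Matrix.det (Matrix.of fun a b : Fin ℓ =>
            (X (I a, J b) : MvPolynomial (Fin n × Fin k) ℂ))))) = 0 :=
  minor_is_harmonic_general n k ℓ I J hI i j
end

section
/- Let S = ℂ[r_{ij}, w_i] with cubics c_j = Σ_i r_{ij} w_i as above. The composite map ℂ[w₁,…,w_k] → S → S/(c₁,…,c_k) is injective. Consequently S/(c₁,…,c_k) is not finitely generated as a module over the subring ℂ[r_{ij}]. -/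
/-!
Setting every `r_{ij}` to `0` kills the cubics `c_j`, so it induces a surjective ring map
`S/(c₁,…,c_k) → ℂ[w]` that is a left inverse of `ℂ[w] → S/(c₁,…,c_k)`. Along this map the
`ℂ[r_{ij}]`-module structure of the quotient becomes the `ℂ`-module structure of `ℂ[w]`
(through the constant coefficient), so finiteness of the quotient over `ℂ[r_{ij}]` would make
`ℂ[w]` a finite-dimensional `ℂ`-vector space, which it is not once `k > 0`.
-/

open MvPolynomial

/-- The ring `S = ℂ[r_{ij}, w_i]`: symmetric indeterminates `r_{ij}` indexed by
unordered pairs `Sym2 (Fin k)`, together with `w₁, …, w_k`. -/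
noncomputable abbrev Stmt5.S (k : ℕ) := MvPolynomial (Sym2 (Fin k) ⊕ Fin k) ℂ

/-- The ideal generated by the cubics `c_j = Σ_{i=1}^k r_{ij} w_i`. -/
noncomputable def Stmt5.cIdeal (k : ℕ) : Ideal (Stmt5.S k) :=
  Ideal.span (Set.range fun j : Fin k =>
    (∑ i : Fin k, X (Sum.inl s(i, j)) * X (Sum.inr i) : Stmt5.S k))

/-- The composite `ℂ[w₁,…,w_k] → S → S/(c₁,…,c_k)`. -/
noncomputable def Stmt5.wMap (k : ℕ) :
    MvPolynomial (Fin k) ℂ →+* Stmt5.S k ⧸ Stmt5.cIdeal k :=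
  (Ideal.Quotient.mk (Stmt5.cIdeal k)).comp
    (rename (Sum.inr : Fin k → Sym2 (Fin k) ⊕ Fin k)).toRingHom

/-- The structure map `ℂ[r_{ij}] → S → S/(c₁,…,c_k)`, exhibiting the quotient as an
algebra (in particular a module) over the subring `ℂ[r_{ij}]`. -/
noncomputable def Stmt5.rMap (k : ℕ) :
    MvPolynomial (Sym2 (Fin k)) ℂ →+* Stmt5.S k ⧸ Stmt5.cIdeal k :=
  (Ideal.Quotient.mk (Stmt5.cIdeal k)).comp
    (rename (Sum.inl : Sym2 (Fin k) → Sym2 (Fin k) ⊕ Fin k)).toRingHom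

namespace MvPolynomial

variable {R : Type*} [CommRing R]

theorem not_moduleFinite [Nontrivial R] {σ : Type*} [Nonempty σ] :
    ¬ Module.Finite R (MvPolynomial σ R) := by
  intro hfin
  obtain ⟨b⟩ := ‹Nonempty σ›
  let f : MvPolynomial σ R →ₐ[R] Polynomial R := aeval fun _ => Polynomial.X
  have hf : Function.Surjective f := fun q =>
    ⟨Polynomial.aeval (X b) q, by
      rw [← Polynomial.aeval_algHom_apply, aeval_X, Polynomial.aeval_X_left_apply]⟩
  exact Polynomial.not_finite (Module.Finite.of_surjective f.toLinearMap hf)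

variable {A B : Type*}

noncomputable def killInl : MvPolynomial (A ⊕ B) R →ₐ[R] MvPolynomial B R :=
  aeval (Sum.elim 0 X)

@[simp]
theorem killInl_rename_inr (p : MvPolynomial B R) :
    killInl (rename (Sum.inr : B → A ⊕ B) p) = p := by
  rw [killInl, aeval_rename, Sum.elim_comp_inr, aeval_X_left_apply]

@[simp]
theorem killInl_rename_inl (p : MvPolynomial A R) :
    killInl (rename (Sum.inl : A → A ⊕ B) p) = C (constantCoeff p) := by
  rw [killInl, aeval_rename, Sum.elim_comp_inl]
  exact aeval_zero' p

variable {I : Ideal (MvPolynomial (A ⊕ B) R)}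

theorem injective_quotientMk_comp_rename_inr (hI : I ≤ RingHom.ker (killInl (A := A))) :
    Function.Injective ((Ideal.Quotient.mk I).comp (rename (Sum.inr : B → A ⊕ B)).toRingHom) := by
  refine (injective_iff_map_eq_zero _).mpr fun p hp => ?_
  have hmem : rename Sum.inr p ∈ I := Ideal.Quotient.eq_zero_iff_mem.mp hp
  simpa using hI hmem

theorem not_finite_quotientMk_comp_rename_inl [Nontrivial R] [Nonempty B]
    (hI : I ≤ RingHom.ker (killInl (A := A))) :
    ¬ ((Ideal.Quotient.mk I).comp (rename (Sum.inl : A → A ⊕ B)).toRingHom).Finite := by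
  intro hfin
  let g : MvPolynomial (A ⊕ B) R ⧸ I →+* MvPolynomial B R :=
    Ideal.Quotient.lift I killInl.toRingHom fun _ ha => hI ha
  have hg : Function.Surjective g := fun p =>
    ⟨Ideal.Quotient.mk I (rename Sum.inr p), killInl_rename_inr p⟩
  have hcomp : g.comp ((Ideal.Quotient.mk I).comp (rename Sum.inl).toRingHom)
      = (C : R →+* MvPolynomial B R).comp constantCoeff :=
    RingHom.ext fun p => killInl_rename_inl p
  have hC : (C : R →+* MvPolynomial B R).Finite :=
    .of_comp_finite (hcomp ▸ (RingHom.Finite.of_surjective g hg).comp hfin)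
  exact not_moduleFinite (RingHom.finite_algebraMap.mp hC)

end MvPolynomial

theorem Stmt5.cIdeal_le_ker_killInl (k : ℕ) :
    Stmt5.cIdeal k ≤ RingHom.ker (killInl (R := ℂ) (A := Sym2 (Fin k))) := by
  rw [Stmt5.cIdeal, Ideal.span_le]
  rintro _ ⟨j, rfl⟩
  simp [killInl]

/-- The composite map `ℂ[w₁,…,w_k] → S/(c₁,…,c_k)` is injective; consequently
`S/(c₁,…,c_k)` is not finitely generated as a module over the subring `ℂ[r_{ij}]`. -/
theorem quotient_by_cubics_injective_and_infinite (k : ℕ) (hk : 0 < k) :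
    Function.Injective (Stmt5.wMap k) ∧
      ¬ @Module.Finite (MvPolynomial (Sym2 (Fin k)) ℂ) (Stmt5.S k ⧸ Stmt5.cIdeal k) _ _
          (@Algebra.toModule _ _ _ _ (Stmt5.rMap k).toAlgebra) := by
  have : Nonempty (Fin k) := ⟨⟨0, hk⟩⟩
  exact ⟨injective_quotientMk_comp_rename_inr (Stmt5.cIdeal_le_ker_killInl k),
    not_finite_quotientMk_comp_rename_inl (Stmt5.cIdeal_le_ker_killInl k)⟩
end

section
/- Let P = ℂ[z_{αi}, w_i : 1 ≤ α ≤ n, 1 ≤ i ≤ k] with k ≥ n and q_α = Σ_{i=1}^k z_{αi} w_i. The map ℂ[w₁,…,w_k] → P/(q₁,…,q_n) sending f to its class is injective. -/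
open MvPolynomial

theorem Ideal.injective_quotientMk_comp_of_leftInverse {A B : Type*} [CommRing A] [CommRing B]
    {f : A →+* B} {g : B →+* A} (hgf : Function.LeftInverse g f) {I : Ideal B}
    (hI : I ≤ RingHom.ker g) : Function.Injective ((Ideal.Quotient.mk I).comp f) :=
  Function.LeftInverse.injective (g := Ideal.Quotient.lift I g hI) fun a =>
    (Ideal.Quotient.lift_mk I g hI).trans (hgf a)

theorem MvPolynomial.killCompl_inr_X_inl {R σ τ : Type*} [CommSemiring R] (a : σ) :
    killCompl Sum.inr_injective (X (Sum.inl a) : MvPolynomial (σ ⊕ τ) R) = 0 := by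
  simp [killCompl]

theorem w_polynomials_inject_in_quotient_general (n k : ℕ) :
    Function.Injective
      ((Ideal.Quotient.mk (Ideal.span (Set.range fun α : Fin n =>
          (∑ i : Fin k, X (Sum.inl (α, i)) * X (Sum.inr i) :
            MvPolynomial ((Fin n × Fin k) ⊕ Fin k) ℂ)))).comp
        (rename (Sum.inr : Fin k → (Fin n × Fin k) ⊕ Fin k)).toRingHom) := by
  -- Setting the `z`'s to zero retracts `P` onto `ℂ[w]` and kills every `q_α`.
  refine Ideal.injective_quotientMk_comp_of_leftInverse
    (g := (killCompl Sum.inr_injective).toRingHom) (killCompl_rename_app _ ·) ?_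
  rw [Ideal.span_le]
  rintro _ ⟨α, rfl⟩
  simp [killCompl_inr_X_inl]

/-- Let `P = ℂ[z_{αi}, w_i : 1 ≤ α ≤ n, 1 ≤ i ≤ k]` with `k ≥ n`, and
`q_α = Σ_{i=1}^k z_{αi} w_i`.  The map `ℂ[w₁,…,w_k] → P/(q₁,…,q_n)` sending a
polynomial in the `w`'s to its class in the quotient is injective. -/
theorem w_polynomials_inject_in_quotient (n k : ℕ) (hk : n ≤ k) :
    Function.Injective
      ((Ideal.Quotient.mk (Ideal.span (Set.range fun α : Fin n =>
          (∑ i : Fin k, X (Sum.inl (α, i)) * X (Sum.inr i) :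
            MvPolynomial ((Fin n × Fin k) ⊕ Fin k) ℂ)))).comp
        (rename (Sum.inr : Fin k → (Fin n × Fin k) ⊕ Fin k)).toRingHom) :=
  w_polynomials_inject_in_quotient_general n k
end

section
/- Let P = ℂ[z_{αi}, w_i : 1 ≤ α ≤ n, 1 ≤ i ≤ k] with k > n, let det₊ denote the determinant of the n × n matrix (z_{αi})_{1 ≤ α,i ≤ n}, and let q_α = Σ_{i=1}^k z_{αi} w_i. Then the map ℂ[w_{n+1},…,w_k] → P/(q₁,…,q_n) sending f to the class of f·det₊ is injective. -/
open MvPolynomial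

/-- `P = ℂ[z_{αi}, w_i]` with `z`-variables indexed by `Fin n × Fin k` and `w`-variables
by `Fin k`. -/
noncomputable abbrev Stmt7.P (n k : ℕ) := MvPolynomial ((Fin n × Fin k) ⊕ Fin k) ℂ

/-- The determinant `det₊` of the upper-left `n × n` block `(z_{αi})_{1 ≤ α,i ≤ n}`. -/
noncomputable def Stmt7.detPlus (n k : ℕ) (h : n ≤ k) : Stmt7.P n k :=
  Matrix.det (Matrix.of fun α i : Fin n =>
    (X (Sum.inl (α, Fin.castLE h i)) : Stmt7.P n k))

/-- The ideal generated by the quadratics `q_α = Σ_{i=1}^k z_{αi} w_i`. -/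
noncomputable def Stmt7.qIdeal (n k : ℕ) : Ideal (Stmt7.P n k) :=
  Ideal.span (Set.range fun α : Fin n =>
    (∑ i : Fin k, X (Sum.inl (α, i)) * X (Sum.inr i) : Stmt7.P n k))

/-!
Specialize `z_{αi} ↦ w_L δ_{i,α} - w_α δ_{i,L}` for a fixed index `L ≥ n`, keeping every `w_i`.
Each `q_α` becomes `w_L w_α - w_α w_L = 0`, the block `(z_{αi})_{α,i < n}` becomes `w_L · 1`, so
`det₊ ↦ w_L ^ n`, and polynomials in the `w`'s are untouched. Hence `f det₊ ∈ (q)` forces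
`f w_L ^ n = 0` in the domain `ℂ[w]`, i.e. `f = 0`.
-/

theorem Ideal.injective_quotient_mk_mul_of_le_ker {A B C F : Type*} [CommRing A] [CommRing B]
    [FunLike F A B] [RingHomClass F A B] {I : Ideal A} {φ : F} (hI : I ≤ RingHom.ker φ)
    {d : A} (hd : φ d ∈ nonZeroDivisors B) {ι : C → A} (hι : Function.Injective (φ ∘ ι)) :
    Function.Injective fun x => Ideal.Quotient.mk I (ι x * d) := by
  intro x y hxy
  have hmem : ι x * d - ι y * d ∈ RingHom.ker φ := hI (Ideal.Quotient.eq.mp hxy)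
  rw [RingHom.mem_ker, map_sub, map_mul, map_mul, ← sub_mul,
    mul_right_mem_nonZeroDivisors_eq_zero_iff hd, sub_eq_zero] at hmem
  exact hι hmem

namespace Stmt7

variable {n k : ℕ}

noncomputable def specialization (e : Fin n → Fin k) (L : Fin k) :
    P n k →ₐ[ℂ] MvPolynomial (Fin k) ℂ :=
  aeval <| Sum.elim
    (fun p => (if p.2 = e p.1 then X L else 0) - if p.2 = L then X (e p.1) else 0) X

theorem qIdeal_le_ker_specialization (e : Fin n → Fin k) (L : Fin k) :
    qIdeal n k ≤ RingHom.ker (specialization e L) := by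
  rw [qIdeal, Ideal.span_le]
  rintro _ ⟨α, rfl⟩
  simp only [SetLike.mem_coe, RingHom.mem_ker, map_sum, map_mul, specialization, aeval_X,
    Sum.elim_inl, Sum.elim_inr, sub_mul, ite_mul, zero_mul, Finset.sum_sub_distrib,
    Finset.sum_ite_eq', Finset.mem_univ, if_true]
  ring

theorem specialization_detPlus (h : n ≤ k) (L : Fin k) (hL : ∀ i : Fin n, Fin.castLE h i ≠ L) :
    specialization (Fin.castLE h) L (detPlus n k h) = X L ^ n := by
  have hdiag : (Matrix.of fun α i : Fin n => (X (Sum.inl (α, Fin.castLE h i)) : P n k)).map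
      (specialization (Fin.castLE h) L) = Matrix.diagonal fun _ => X L := by
    refine Matrix.ext fun α i => ?_
    simp [specialization, Matrix.diagonal_apply, (hL i).symm, Fin.castLE_inj, eq_comm]
  rw [detPlus, AlgHom.map_det, AlgHom.mapMatrix_apply, hdiag, Matrix.det_diagonal,
    Finset.prod_const, Finset.card_univ, Fintype.card_fin]

theorem specialization_rename_inr {σ : Type*} (e : Fin n → Fin k) (L : Fin k) (s : σ → Fin k)
    (f : MvPolynomial σ ℂ) :
    specialization e L (rename (fun i => Sum.inr (s i)) f) = rename s f := by
  rw [specialization, aeval_rename]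
  congr 1
  exact algHom_ext fun i => by simp

end Stmt7

open Stmt7 in
/-- For `k > n`, the map `ℂ[w_{n+1},…,w_k] → P/(q₁,…,q_n)` sending `f` to the class of
`f · det₊` is injective.  Here `ℂ[w_{n+1},…,w_k]` is the polynomial ring on the
`w`-variables with index `≥ n`. -/
theorem det_plus_inject_in_quotient (n k : ℕ) (hk : n < k) :
    Function.Injective (fun f : MvPolynomial {i : Fin k // n ≤ (i : ℕ)} ℂ =>
      Ideal.Quotient.mk (Stmt7.qIdeal n k)
        ((rename (fun i : {i : Fin k // n ≤ (i : ℕ)} =>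
            (Sum.inr i.1 : (Fin n × Fin k) ⊕ Fin k)) f) *
          Stmt7.detPlus n k hk.le)) := by
  let L : Fin k := ⟨n, hk⟩
  have hL : ∀ i : Fin n, Fin.castLE hk.le i ≠ L := fun i h => i.isLt.ne (congrArg Fin.val h)
  refine Ideal.injective_quotient_mk_mul_of_le_ker (qIdeal_le_ker_specialization (Fin.castLE hk.le) L) ?_ ?_
  · rw [specialization_detPlus hk.le L hL]
    exact mem_nonZeroDivisors_of_ne_zero (pow_ne_zero _ (X_ne_zero L))
  · have hcomp : (specialization (Fin.castLE hk.le) L ∘ fun f : MvPolynomial _ ℂ =>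
        rename (fun i : {i : Fin k // n ≤ (i : ℕ)} => Sum.inr i.1) f) = rename Subtype.val := by
      funext f
      exact specialization_rename_inr _ L Subtype.val f
    rw [hcomp]
    exact rename_injective _ Subtype.val_injective
end

section
/- Let (M, d) be a filtered cochain complex with decreasing, bounded above, exhaustive filtration preserved by d. If H^{ℓ-1}(gr(M)) = 0 and H^{ℓ+1}(gr(M)) = 0, then H^ℓ(M) ≅ H^ℓ(gr(M)). -/
/-!
The cocycles `K_p = F^p ∩ ker d` in degree `ℓ` induce a filtration on `H^ℓ(M)` whose graded
pieces are `K_p / (K_{p+1} + K_p ∩ im d)`, and the map `K_p → E₁^p` identifies them with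
`E₁^p`: it is onto because, by `H^{ℓ+1}(gr M) = 0` and descending induction down from the
bound of the filtration, every cocycle of `gr M` can be corrected by an element of `F^{p+1}` into
a true cocycle; its kernel is as claimed because, by `H^{ℓ-1}(gr M) = 0`, a boundary lying in
`F^p` is the boundary of an element of `F^p`. Finally, choosing linear sections of the maps
`K_p → E₁^p` splits the filtration, which is exhaustive and bounded above, so `H^ℓ(M)` is the
direct sum of its graded pieces.
-/

open DirectSum

theorem Int.induction_down {P : ℤ → Prop} (N : ℤ) (hge : ∀ q, N ≤ q → P q)
    (step : ∀ q, P (q + 1) → P q) (q : ℤ) : P q := by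
  induction q using Int.inductionOn' (b := N) with
  | zero => exact hge N le_rfl
  | succ k _ _ => exact hge (k + 1) (by omega)
  | pred k _ ih => exact step (k - 1) (by simpa using ih)

section FilteredQuotient

variable {R W : Type*} [Ring R] [AddCommGroup W] [Module R W] {K : ℤ → Submodule R W}
  {D : Submodule R W} {E : ℤ → Type*} [∀ p, AddCommGroup (E p)] [∀ p, Module R (E p)]

variable (K) in
def sumOfLifts (s : ∀ p, E p →ₗ[R] K p) : (⨁ p, E p) →ₗ[R] W :=
  toModule R ℤ W fun p => (K p).subtype ∘ₗ s p

@[simp]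
theorem sumOfLifts_of (s : ∀ p, E p →ₗ[R] K p) (p : ℤ) (e : E p) :
    sumOfLifts K s (of E p e) = s p e := by
  rw [sumOfLifts, ← lof_eq_of R, toModule_lof]
  rfl

theorem sumOfLifts_mem (hK : Antitone K) (s : ∀ p, E p →ₗ[R] K p) {ξ : ⨁ p, E p} {p : ℤ}
    (hξ : ∀ q, ξ q ≠ 0 → p ≤ q) : sumOfLifts K s ξ ∈ K p := by
  classical
  rw [← sum_support_of ξ, map_sum]
  refine Submodule.sum_mem _ fun q hq => ?_
  rw [sumOfLifts_of]
  exact hK (hξ q (DFinsupp.mem_support_iff.mp hq)) (s q (ξ q)).2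

theorem filtration_le_range_sumOfLifts_sup (hbdd : ∃ N, ∀ p, N ≤ p → K p = ⊥)
    (φ : ∀ p, K p →ₗ[R] E p) (s : ∀ p, E p →ₗ[R] K p) (hs : ∀ p e, φ p (s p e) = e)
    (hker : ∀ p, LinearMap.ker (φ p) ≤ (K (p + 1) ⊔ D).comap (K p).subtype) (p : ℤ) :
    K p ≤ LinearMap.range (sumOfLifts K s) ⊔ D := by
  obtain ⟨N, hN⟩ := hbdd
  induction p using Int.induction_down N with
  | hge p hp => simp [hN p hp]
  | step p ih =>
    intro x hx
    set e := φ p ⟨x, hx⟩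
    have hrem : (⟨x, hx⟩ - s p e : K p) ∈ LinearMap.ker (φ p) := by simp [e, hs]
    have hlift : (s p e : W) ∈ LinearMap.range (sumOfLifts K s) := ⟨of E p e, sumOfLifts_of s p e⟩
    have hx' : x = s p e + (x - s p e) := by abel
    rw [hx']
    exact Submodule.add_mem _ (Submodule.mem_sup_left hlift)
      (sup_le ih le_sup_right (hker p hrem))

theorem eq_zero_of_sumOfLifts_mem (hK : Antitone K)
    (φ : ∀ p, K p →ₗ[R] E p) (s : ∀ p, E p →ₗ[R] K p) (hs : ∀ p e, φ p (s p e) = e)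
    (hker : ∀ p, (K (p + 1) ⊔ D).comap (K p).subtype ≤ LinearMap.ker (φ p))
    {ξ : ⨁ p, E p} (hξ : sumOfLifts K s ξ ∈ D) : ξ = 0 := by
  classical
  by_contra hne
  have hsupp : ξ.support.Nonempty := by
    rw [Finset.nonempty_iff_ne_empty, Ne, DFinsupp.support_eq_empty]
    exact hne
  set p := ξ.support.min' hsupp
  have hmin : ∀ q, ξ q ≠ 0 → p ≤ q := fun q hq =>
    ξ.support.min'_le q (DFinsupp.mem_support_iff.mpr hq)
  have htail : sumOfLifts K s (ξ.erase p) ∈ K (p + 1) := by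
    refine sumOfLifts_mem hK s fun q hq => ?_
    have hqp : q ≠ p := fun h => hq (by simp [h])
    have := hmin q (by simpa [DFinsupp.erase_ne hqp] using hq)
    omega
  have hsplit : (s p (ξ p) : W) = sumOfLifts K s ξ - sumOfLifts K s (ξ.erase p) := by
    nth_rw 2 [← DFinsupp.erase_add_single p ξ]
    rw [map_add, show sumOfLifts K s (DFinsupp.single p (ξ p)) = s p (ξ p) from
      sumOfLifts_of s p (ξ p)]
    abel
  have hzero : ξ p = 0 := by
    rw [← hs p (ξ p)]
    refine hker p ?_
    rw [Submodule.mem_comap, Submodule.subtype_apply, hsplit, sub_eq_neg_add]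
    exact Submodule.add_mem _ (Submodule.mem_sup_left (Submodule.neg_mem _ htail))
      (Submodule.mem_sup_right hξ)
  exact DFinsupp.mem_support_iff.mp (ξ.support.min'_mem hsupp) hzero

theorem nonempty_quotient_equiv_directSum_of_filtration [∀ p, Module.Projective R (E p)]
    (hK : Antitone K) (hexh : ∀ x, ∃ p, x ∈ K p) (hbdd : ∃ N, ∀ p, N ≤ p → K p = ⊥)
    (φ : ∀ p, K p →ₗ[R] E p) (hφ : ∀ p, Function.Surjective (φ p))
    (hker : ∀ p, LinearMap.ker (φ p) = (K (p + 1) ⊔ D).comap (K p).subtype) :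
    Nonempty ((W ⧸ D) ≃ₗ[R] ⨁ p, E p) := by
  choose s hs using fun p =>
    (φ p).exists_rightInverse_of_surjective (LinearMap.range_eq_top.mpr (hφ p))
  replace hs : ∀ p e, φ p (s p e) = e := fun p => LinearMap.congr_fun (hs p)
  have hinj : Function.Injective (D.mkQ ∘ₗ sumOfLifts K s) := by
    rw [← LinearMap.ker_eq_bot, LinearMap.ker_eq_bot']
    intro ξ hξ
    exact eq_zero_of_sumOfLifts_mem hK φ s hs (fun p => (hker p).ge)
      ((Submodule.Quotient.mk_eq_zero D).mp hξ)
  have hsurj : Function.Surjective (D.mkQ ∘ₗ sumOfLifts K s) := by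
    rw [← LinearMap.range_eq_top, LinearMap.range_comp, Submodule.map_mkQ_eq_top, sup_comm,
      eq_top_iff]
    intro x _
    obtain ⟨p, hp⟩ := hexh x
    exact filtration_le_range_sumOfLifts_sup hbdd φ s hs (fun p => (hker p).le) p hp
  exact ⟨(LinearEquiv.ofBijective _ ⟨hinj, hsurj⟩).symm⟩

end FilteredQuotient

section FilteredComplex

variable {R : Type*} [Ring R] {M : ℤ → Type*} [∀ i, AddCommGroup (M i)] [∀ i, Module R (M i)]
  (d : ∀ i, M i →ₗ[R] M (i + 1)) (F : ℤ → ∀ i, Submodule R (M i))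

/-- `H^{i+1}(gr M) = 0`. The degree is shifted by one because `d (n - 1)` does not land in
`M n` definitionally. -/
def GrAcyclicAt (i : ℤ) : Prop :=
  ∀ p, ∀ x ∈ F p (i + 1), d (i + 1) x ∈ F (p + 1) (i + 1 + 1) →
    ∃ y ∈ F p i, ∃ z ∈ F (p + 1) (i + 1), x = d i y + z

def grCycles (p i : ℤ) : Submodule R (M i) :=
  F p i ⊓ (F (p + 1) (i + 1)).comap (d i)

def grBoundaries (p i : ℤ) : Submodule R (M (i + 1)) :=
  (F p i).map (d i) ⊔ (F (p + 1) (i + 1) ⊓ grCycles d F p (i + 1))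

/-- `E₁^p` in degree `i + 1`. -/
abbrev grCohomology (p i : ℤ) : Type _ :=
  grCycles d F p (i + 1) ⧸ (grBoundaries d F p i).comap (grCycles d F p (i + 1)).subtype

def cocycleFiltration (p i : ℤ) : Submodule R (LinearMap.ker (d i)) :=
  (F p i).comap (LinearMap.ker (d i)).subtype

def toGrCohomology (p i : ℤ) : cocycleFiltration d F p (i + 1) →ₗ[R] grCohomology d F p i :=
  Submodule.mkQ _ ∘ₗ LinearMap.codRestrict (grCycles d F p (i + 1))
    ((LinearMap.ker (d (i + 1))).subtype ∘ₗ (cocycleFiltration d F p (i + 1)).subtype)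
    fun x => ⟨x.2, by simp [LinearMap.mem_ker.mp x.1.2]⟩

variable {d F}

theorem GrAcyclicAt.exists_mem_succ_d_eq {i : ℤ} (hgr : GrAcyclicAt d F i)
    (hdd : ∀ i (x : M i), d (i + 1) (d i x) = 0) (hF : ∀ i, Antitone (F · i))
    (hbdd : ∃ N, ∀ p, N ≤ p → ∀ i, F p i = ⊥) {p q : ℤ} (hpq : p + 1 ≤ q) {x : M i}
    (hx : x ∈ F p i) (hdx : d i x ∈ F q (i + 1)) : ∃ w ∈ F (p + 1) i, d i w = d i x := by
  obtain ⟨N, hN⟩ := hbdd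
  induction q using Int.induction_down N generalizing x with
  | hge q hq =>
    rw [hN q hq, Submodule.mem_bot] at hdx
    exact ⟨0, Submodule.zero_mem _, by rw [map_zero, hdx]⟩
  | step q ih =>
    obtain ⟨y, hy, z, hz, hdxyz⟩ := hgr q (d i x) hdx (by rw [hdd]; exact Submodule.zero_mem _)
    have hdz : d i (x - y) = z := by rw [map_sub, hdxyz]; abel
    obtain ⟨w, hw, hdw⟩ := ih (by omega) (Submodule.sub_mem _ hx (hF i (by omega) hy)) (hdz ▸ hz)
    refine ⟨y + w, Submodule.add_mem _ (hF i hpq hy) hw, ?_⟩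
    rw [map_add, hdw, map_sub]
    abel

theorem GrAcyclicAt.exists_mem_d_eq {i : ℤ} (hgr : GrAcyclicAt d F i)
    (hdd : ∀ i (x : M i), d (i + 1) (d i x) = 0) (hF : ∀ i, Antitone (F · i))
    {p q : ℤ} {u : M (i + 1)} (hu : u ∈ F p (i + 1)) (hdu : d (i + 1) u ∈ F q (i + 1 + 1)) :
    ∃ u' ∈ F q (i + 1), d (i + 1) u' = d (i + 1) u := by
  induction p using Int.induction_down q generalizing u with
  | hge p hqp => exact ⟨u, hF _ hqp hu, rfl⟩
  | step p ih =>
    by_cases hqp : q ≤ p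
    · exact ⟨u, hF _ hqp hu, rfl⟩
    obtain ⟨y, -, z, hz, rfl⟩ := hgr p u hu (hF _ (by omega) hdu)
    have hdz : d (i + 1) (d i y + z) = d (i + 1) z := by rw [map_add, hdd, zero_add]
    rw [hdz] at hdu ⊢
    exact ih hz hdu

theorem toGrCohomology_surjective {i : ℤ} (hgr : GrAcyclicAt d F (i + 1))
    (hdd : ∀ i (x : M i), d (i + 1) (d i x) = 0) (hF : ∀ i, Antitone (F · i))
    (hbdd : ∃ N, ∀ p, N ≤ p → ∀ i, F p i = ⊥) (p : ℤ) :
    Function.Surjective (toGrCohomology d F p i) := by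
  intro e
  obtain ⟨⟨x, hxF, hdx⟩, rfl⟩ := Submodule.Quotient.mk_surjective _ e
  obtain ⟨w, hw, hdw⟩ := hgr.exists_mem_succ_d_eq hdd hF hbdd le_rfl hxF hdx
  have hwZ : w ∈ grCycles d F p (i + 1) := ⟨hF _ (by omega) hw, by simpa [hdw] using hdx⟩
  refine ⟨⟨⟨x - w, by simp [hdw]⟩, Submodule.sub_mem _ hxF (hF _ (by omega) hw)⟩, ?_⟩
  refine (Submodule.Quotient.eq _).mpr ?_
  show x - w - x ∈ grBoundaries d F p i
  rw [sub_sub_cancel_left]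
  exact Submodule.neg_mem _ (Submodule.mem_sup_right ⟨hw, hwZ⟩)

theorem ker_toGrCohomology {b : ℤ} (hgr : GrAcyclicAt d F b)
    (hdd : ∀ i (x : M i), d (i + 1) (d i x) = 0) (hF : ∀ i, Antitone (F · i))
    (hexh : ∀ i (x : M i), ∃ p, x ∈ F p i) (p : ℤ) :
    LinearMap.ker (toGrCohomology d F p (b + 1)) =
      (cocycleFiltration d F (p + 1) (b + 1 + 1) ⊔
        (LinearMap.range (d (b + 1))).comap (LinearMap.ker (d (b + 1 + 1))).subtype).comap
        (cocycleFiltration d F p (b + 1 + 1)).subtype := by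
  ext ⟨⟨x, hxker⟩, hxF⟩
  rw [LinearMap.mem_ker, toGrCohomology, LinearMap.comp_apply, Submodule.mkQ_apply,
    Submodule.Quotient.mk_eq_zero, Submodule.mem_comap, Submodule.mem_comap]
  show x ∈ grBoundaries d F p (b + 1) ↔ _
  constructor
  · intro hx
    obtain ⟨_, ⟨y, -, rfl⟩, c, ⟨hcF, -⟩, hsum⟩ := Submodule.mem_sup.mp hx
    have hdc : d (b + 1 + 1) c = 0 := by
      rw [eq_sub_of_add_eq' hsum, map_sub, LinearMap.mem_ker.mp hxker, hdd, sub_zero]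
    refine Submodule.mem_sup.mpr ⟨⟨c, hdc⟩, hcF, ⟨d (b + 1) y, hdd _ y⟩, ⟨y, rfl⟩, ?_⟩
    ext
    simp [← hsum, add_comm]
  · intro hx
    obtain ⟨⟨c, hc⟩, hcF, ⟨e, he⟩, ⟨v, hve⟩, hsum⟩ := Submodule.mem_sup.mp hx
    replace hsum : c + d (b + 1) v = x := by rw [hve]; exact congrArg Subtype.val hsum
    obtain ⟨q, hvq⟩ := hexh _ v
    have hdv : d (b + 1) v ∈ F p (b + 1 + 1) := by
      rw [eq_sub_of_add_eq' hsum]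
      exact Submodule.sub_mem _ hxF (hF _ (by omega) hcF)
    obtain ⟨u, hu, hdu⟩ := hgr.exists_mem_d_eq hdd hF hvq hdv
    have hcZ : c ∈ grCycles d F p (b + 1 + 1) :=
      ⟨hF _ (by omega) hcF, by simp [LinearMap.mem_ker.mp hc]⟩
    refine Submodule.mem_sup.mpr ⟨d (b + 1) u, ⟨u, hu, rfl⟩, c, ⟨hcF, hcZ⟩, ?_⟩
    rw [hdu]
    exact (add_comm _ _).trans hsum

end FilteredComplex

theorem cohomology_iso_gr_cohomology_general
    (M : ℤ → Type*) [∀ i, AddCommGroup (M i)] [∀ i, Module ℂ (M i)]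
    (d : ∀ i, M i →ₗ[ℂ] M (i + 1))
    (hdd : ∀ i (x : M i), d (i + 1) (d i x) = 0)
    (F : ℤ → ∀ i, Submodule ℂ (M i))
    (hdec : ∀ p i, F (p + 1) i ≤ F p i)
    (hexh : ∀ i (x : M i), ∃ p, x ∈ F p i)
    (hbdd : ∃ N, ∀ p, N ≤ p → ∀ i, F p i = ⊥)
    (b : ℤ)
    -- `H^{ℓ-1}(gr M) = 0`, where `ℓ - 1 = b + 1`:
    (hgr₁ : ∀ p, ∀ x ∈ F p (b + 1), d (b + 1) x ∈ F (p + 1) (b + 1 + 1) →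
      ∃ y ∈ F p b, ∃ z ∈ F (p + 1) (b + 1), x = d b y + z)
    -- `H^{ℓ+1}(gr M) = 0`, where `ℓ + 1 = b + 1 + 1 + 1`:
    (hgr₂ : ∀ p, ∀ x ∈ F p (b + 1 + 1 + 1),
      d (b + 1 + 1 + 1) x ∈ F (p + 1) (b + 1 + 1 + 1 + 1) →
      ∃ y ∈ F p (b + 1 + 1), ∃ z ∈ F (p + 1) (b + 1 + 1 + 1), x = d (b + 1 + 1) y + z) :
    -- `H^ℓ(M) ≅ H^ℓ(gr M) = ⨁_p E₁^p` in degree `ℓ = b + 1 + 1`: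
    let Zker : Submodule ℂ (M (b + 1 + 1)) := LinearMap.ker (d (b + 1 + 1))
    let Bsub : Submodule ℂ (M (b + 1 + 1)) := LinearMap.range (d (b + 1))
    let Z : ℤ → Submodule ℂ (M (b + 1 + 1)) := fun p =>
      F p (b + 1 + 1) ⊓ (F (p + 1) (b + 1 + 1 + 1)).comap (d (b + 1 + 1))
    let B : ℤ → Submodule ℂ (M (b + 1 + 1)) := fun p =>
      (F p (b + 1)).map (d (b + 1)) ⊔ (F (p + 1) (b + 1 + 1) ⊓ Z p)
    Nonempty ((Zker ⧸ Bsub.comap Zker.subtype) ≃ₗ[ℂ]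
      DirectSum ℤ (fun p => (Z p ⧸ (B p).comap (Z p).subtype))) := by
  intro Zker Bsub Z B
  have hF : ∀ i, Antitone (F · i) := fun i => antitone_int_of_succ_le fun p => hdec p i
  exact nonempty_quotient_equiv_directSum_of_filtration
    (K := (cocycleFiltration d F · (b + 1 + 1))) (D := Bsub.comap Zker.subtype)
    (fun p q hpq => Submodule.comap_mono (hF _ hpq)) (fun x => hexh _ x.1)
    (hbdd.imp fun N hN p hp => by simp [cocycleFiltration, hN p hp])
    (fun p => toGrCohomology d F p (b + 1))
    (toGrCohomology_surjective hgr₂ hdd hF hbdd) (ker_toGrCohomology hgr₁ hdd hF hexh)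

/-- **If `H^{ℓ-1}(gr M) = 0` and `H^{ℓ+1}(gr M) = 0` then `H^ℓ(M) ≅ H^ℓ(gr M)`.**
Let `(M, d)` be a cochain complex of `ℂ`-vector spaces indexed by `ℤ` with a decreasing
filtration `F` preserved by `d`, exhaustive and bounded above.  Fix a degree
`ℓ = b + 1 + 1`.  Vanishing of `H^{ℓ∓1}(gr M)` is expressed elementwise as in the
theory of the spectral sequence of a filtered complex.  The conclusion identifies
`H^ℓ(M) = ker d / im d` with `H^ℓ(gr M)`, the direct sum over `p` of the cohomologies
`E₁^{p} = Z_p / B_p` of the associated graded complex in degree `ℓ`, where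
`Z_p = {x ∈ F^p M^ℓ : d x ∈ F^{p+1}}` and `B_p = d(F^p M^{ℓ-1}) + (F^{p+1} M^ℓ ∩ Z_p)`. -/
theorem cohomology_iso_gr_cohomology
    (M : ℤ → Type*) [∀ i, AddCommGroup (M i)] [∀ i, Module ℂ (M i)]
    (d : ∀ i, M i →ₗ[ℂ] M (i + 1))
    (hdd : ∀ i (x : M i), d (i + 1) (d i x) = 0)
    (F : ℤ → ∀ i, Submodule ℂ (M i))
    (hdec : ∀ p i, F (p + 1) i ≤ F p i)
    (hdF : ∀ p i, ∀ x ∈ F p i, d i x ∈ F p (i + 1))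
    (hexh : ∀ i (x : M i), ∃ p, x ∈ F p i)
    (hbdd : ∃ N, ∀ p, N ≤ p → ∀ i, F p i = ⊥)
    (b : ℤ)
    -- `H^{ℓ-1}(gr M) = 0`, where `ℓ - 1 = b + 1`:
    (hgr₁ : ∀ p, ∀ x ∈ F p (b + 1), d (b + 1) x ∈ F (p + 1) (b + 1 + 1) →
      ∃ y ∈ F p b, ∃ z ∈ F (p + 1) (b + 1), x = d b y + z)
    -- `H^{ℓ+1}(gr M) = 0`, where `ℓ + 1 = b + 1 + 1 + 1`:
    (hgr₂ : ∀ p, ∀ x ∈ F p (b + 1 + 1 + 1),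
      d (b + 1 + 1 + 1) x ∈ F (p + 1) (b + 1 + 1 + 1 + 1) →
      ∃ y ∈ F p (b + 1 + 1), ∃ z ∈ F (p + 1) (b + 1 + 1 + 1), x = d (b + 1 + 1) y + z) :
    -- `H^ℓ(M) ≅ H^ℓ(gr M) = ⨁_p E₁^p` in degree `ℓ = b + 1 + 1`:
    let Zker : Submodule ℂ (M (b + 1 + 1)) := LinearMap.ker (d (b + 1 + 1))
    let Bsub : Submodule ℂ (M (b + 1 + 1)) := LinearMap.range (d (b + 1))
    let Z : ℤ → Submodule ℂ (M (b + 1 + 1)) := fun p =>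
      F p (b + 1 + 1) ⊓ (F (p + 1) (b + 1 + 1 + 1)).comap (d (b + 1 + 1))
    let B : ℤ → Submodule ℂ (M (b + 1 + 1)) := fun p =>
      (F p (b + 1)).map (d (b + 1)) ⊔ (F (p + 1) (b + 1 + 1) ⊓ Z p)
    Nonempty ((Zker ⧸ Bsub.comap Zker.subtype) ≃ₗ[ℂ]
      DirectSum ℤ (fun p => (Z p ⧸ (B p).comap (Z p).subtype))) :=
  cohomology_iso_gr_cohomology_general M d hdd F hdec hexh hbdd b hgr₁ hgr₂
end

section
/- For n = 2m+1, the irreducible representation of SO(n) with highest weight (1,1,…,1) (m ones), i.e. Λ^m ℂ^n, contains a nonzero vector invariant under the standardly embedded subgroup SO(n−k+1) if and only if k > m. -/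
/-!
A diagonal sign matrix flipping an even number `#F` of coordinates lies in `SO(n)`, and on the
basis `e_s = e_{s₁} ∧ ⋯ ∧ e_{sₘ}` of `Λ^m ℂ^n` it acts by `(-1) ^ #(s ∩ F)`. If `k ≤ m`, every
`m`-subset `s` contains a coordinate `i ≥ k - 1` and misses another one `j ≥ k - 1` (there are
only `k - 1 < m` fixed coordinates and `2m + 2 - k > m` free ones); flipping `{i, j}` is an
element of `SO(n - k + 1)` negating `e_s`, so every coordinate of an invariant vector vanishes.
If `k > m`, the vector `e_1 ∧ ⋯ ∧ e_m` is built from fixed vectors only, hence invariant.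
-/

open ExteriorAlgebra Finset Set.powersetCard Matrix

theorem Module.Basis.repr_apply_of_apply_eq_smul {ι R M : Type*} [CommSemiring R]
    [AddCommMonoid M] [Module R M] (b : Module.Basis ι R M) {f : M →ₗ[R] M} {μ : ι → R}
    (hf : ∀ i, f (b i) = μ i • b i) (x : M) (i : ι) :
    b.repr (f x) i = μ i * b.repr x i := by
  have : b.coord i ∘ₗ f = μ i • b.coord i :=
    b.ext fun j => by
      rcases eq_or_ne j i with rfl | hji
      · simp [hf]
      · simp [hf, hji]
  simpa using LinearMap.congr_fun this x

namespace exteriorPower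

variable {R M N : Type*} [CommRing R] [AddCommGroup M] [Module R M] [AddCommGroup N]
  [Module R N] {n : ℕ}

theorem coe_map_apply (f : M →ₗ[R] N) (x : ⋀[R]^n M) :
    (map n f x : ExteriorAlgebra R N) = ExteriorAlgebra.map f x := by
  have : (⋀[R]^n N).subtype ∘ₗ map n f =
      (ExteriorAlgebra.map f).toLinearMap ∘ₗ (⋀[R]^n M).subtype :=
    linearMap_ext <| by ext; simp [map_apply_ιMulti]
  exact LinearMap.congr_fun this x

theorem ιMulti_family_smul {I : Type*} [LinearOrder I] (ε : I → R) (v : I → M)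
    (s : Set.powersetCard I n) :
    ιMulti_family R n (fun t => ε t • v t) s = (∏ t ∈ s.val, ε t) • ιMulti_family R n v s := by
  rw [ιMulti_family, ιMulti_family, ← s.val.image_orderEmbOfFin_univ s.prop,
    prod_image fun a _ b _ h => (s.val.orderEmbOfFin s.prop).injective h]
  exact (ιMulti R n).map_smul_univ _ _

theorem basis_repr_map_diagonal {ι : Type*} [Fintype ι] [LinearOrder ι]
    (ε : ι → R) (x : ⋀[R]^n (ι → R)) (s : Set.powersetCard ι n) :
    ((Pi.basisFun R ι).exteriorPower n).repr (map n (toLin' (diagonal ε)) x) s =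
      (∏ t ∈ s.val, ε t) * ((Pi.basisFun R ι).exteriorPower n).repr x s := by
  refine ((Pi.basisFun R ι).exteriorPower n).repr_apply_of_apply_eq_smul
    (μ := fun u => ∏ t ∈ u.val, ε t) (fun u => ?_) x s
  have : toLin' (diagonal ε) ∘ Pi.basisFun R ι = fun t => ε t • Pi.basisFun R ι t := by
    ext t u
    simp [Pi.single_apply]
  rw [basis_apply, map_apply_ιMulti_family, this, ιMulti_family_smul]

end exteriorPower

namespace ExteriorAlgebra

variable {R M : Type*} [CommRing R] [AddCommGroup M] [Module R M] {n : ℕ}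

theorem map_ιMulti_family_eq_self {I : Type*} [LinearOrder I] {f : M →ₗ[R] M} {v : I → M}
    {s : Set.powersetCard I n} (hf : ∀ t ∈ s.val, f (v t) = v t) :
    map f (ιMulti_family R n v s) = ιMulti_family R n v s := by
  rw [ιMulti_family, map_apply_ιMulti]
  congr 1
  ext a : 1
  exact hf _ ((mem_range_ofFinEmbEquiv_symm_iff_mem s _).mp ⟨a, rfl⟩)

theorem ιMulti_family_basis_ne_zero [Nontrivial R] {I : Type*} [LinearOrder I]
    (b : Module.Basis I R M) (s : Set.powersetCard I n) : ιMulti_family R n b s ≠ 0 := by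
  rw [← exteriorPower.ιMulti_family_apply_coe, ← exteriorPower.basis_apply]
  simpa only [ne_eq, ZeroMemClass.coe_eq_zero] using (b.exteriorPower n).ne_zero s

theorem eq_zero_of_forall_map_diagonal_eq_self [NoZeroDivisors R] [NeZero (2 : R)]
    {ι : Type*} [Fintype ι] [LinearOrder ι] {x : ExteriorAlgebra R (ι → R)}
    (hx : x ∈ ⋀[R]^n (ι → R))
    (h : ∀ s : Set.powersetCard ι n, ∃ ε : ι → R,
      ∏ t ∈ s.val, ε t = -1 ∧ map (toLin' (diagonal ε)) x = x) :
    x = 0 := by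
  set b := (Pi.basisFun R ι).exteriorPower n
  suffices (⟨x, hx⟩ : ⋀[R]^n (ι → R)) = 0 from congrArg Subtype.val this
  refine b.ext_elem fun s => ?_
  obtain ⟨ε, hε, hfix⟩ := h s
  have hfix' : exteriorPower.map n (toLin' (diagonal ε)) ⟨x, hx⟩ = ⟨x, hx⟩ :=
    Subtype.ext ((exteriorPower.coe_map_apply _ _).trans hfix)
  have hneg := exteriorPower.basis_repr_map_diagonal ε ⟨x, hx⟩ s
  rw [hfix', hε] at hneg
  have : (2 : R) * b.repr ⟨x, hx⟩ s = 0 := by linear_combination hneg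
  simpa using (mul_eq_zero.mp this).resolve_left two_ne_zero

end ExteriorAlgebra

section signFlip

variable {ι R : Type*} [DecidableEq ι] [CommRing R]

def signFlip (F : Finset ι) (t : ι) : R := if t ∈ F then -1 else 1

theorem prod_signFlip (F s : Finset ι) : ∏ t ∈ s, (signFlip F t : R) = (-1) ^ #(s ∩ F) := by
  simp [signFlip, prod_ite_mem]

theorem prod_signFlip_pair {s : Finset ι} {i j : ι} (hi : i ∈ s) (hj : j ∉ s) :
    ∏ t ∈ s, (signFlip {i, j} t : R) = -1 := by
  rw [prod_signFlip, inter_insert_of_mem hi, inter_singleton_of_notMem hj]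
  simp

theorem map_diagonal_signFlip {S : Type*} [CommRing S] (f : R →+* S) (F : Finset ι) :
    (diagonal (signFlip F)).map f = diagonal (signFlip F) := by
  rw [diagonal_map (map_zero f)]
  congr 1
  ext t
  simp [signFlip, apply_ite f]

variable [Fintype ι]

theorem diagonal_signFlip_mulVec_single {F : Finset ι} {t : ι} (ht : t ∉ F) :
    diagonal (signFlip F : ι → R) *ᵥ Pi.single t 1 = Pi.single t 1 := by
  simp [signFlip, ht]

theorem diagonal_signFlip_mem_specialOrthogonalGroup {F : Finset ι} (hF : Even #F) :
    diagonal (signFlip F) ∈ specialOrthogonalGroup ι R := by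
  refine mem_specialOrthogonalGroup_iff.mpr ⟨(mem_orthogonalGroup_iff' ι R).mpr ?_, ?_⟩
  · rw [diagonal_transpose, diagonal_mul_diagonal, ← diagonal_one]
    congr 1
    ext t
    unfold signFlip
    split_ifs <;> simp
  · rw [det_diagonal, prod_signFlip, univ_inter, hF.neg_one_pow]

end signFlip

theorem Matrix.map_mulVec_single_one_eq_self {m R S : Type*} [Fintype m] [DecidableEq m]
    [NonAssocSemiring R] [NonAssocSemiring S] (f : R →+* S) {A : Matrix m m R} {j : m}
    (h : A *ᵥ Pi.single j 1 = Pi.single j 1) : A.map f *ᵥ Pi.single j 1 = Pi.single j 1 := by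
  ext i
  have hi := congrFun h i
  simp only [mulVec_single_one, col_apply] at hi ⊢
  simp [hi, Pi.single_apply, apply_ite f]

theorem Fin.exists_mem_ge_and_notMem_ge {N p c : ℕ} {s : Finset (Fin N)} (hs : #s = p)
    (hcp : c < p) (hpN : p + c < N) :
    ∃ i ∈ s, c ≤ (i : ℕ) ∧ ∃ j ∉ s, c ≤ (j : ℕ) := by
  let B : Finset (Fin N) := {t | (t : ℕ) < c}
  have hB : #B = c := by simp only [B, Fin.card_filter_val_lt]; omega
  obtain ⟨i, his, hiB⟩ := exists_mem_notMem_of_card_lt_card (s := B) (t := s) (by omega)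
  obtain ⟨j, hjB, hjs⟩ := exists_mem_notMem_of_card_lt_card (s := s) (t := Bᶜ)
    (by rw [card_compl, Fintype.card_fin]; omega)
  exact ⟨i, his, by simpa [B] using hiB, j, hjs, by simpa [B] using hjB⟩

theorem exterior_power_invariants_iff_general (m k : ℕ) (hm : 0 < m) :
    (∃ v : ExteriorAlgebra ℂ (Fin (2 * m + 1) → ℂ),
      v ∈ ⋀[ℂ]^m (Fin (2 * m + 1) → ℂ) ∧ v ≠ 0 ∧
      ∀ g : Matrix.specialOrthogonalGroup (Fin (2 * m + 1)) ℝ,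
        (∀ i : Fin (2 * m + 1), (i : ℕ) < k - 1 →
          Matrix.mulVec (g : Matrix (Fin (2 * m + 1)) (Fin (2 * m + 1)) ℝ) (Pi.single i 1)
            = Pi.single i 1) →
        ExteriorAlgebra.map
          (Matrix.toLin'
            (((g : Matrix (Fin (2 * m + 1)) (Fin (2 * m + 1)) ℝ)).map
              (Complex.ofReal : ℝ → ℂ))) v = v)
    ↔ m < k := by
  constructor
  · rintro ⟨v, hv, hv0, hinv⟩
    by_contra! hkm
    refine hv0 (eq_zero_of_forall_map_diagonal_eq_self hv fun s => ?_)
    obtain ⟨i, his, hi, j, hjs, hj⟩ :=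
      Fin.exists_mem_ge_and_notMem_ge s.prop (c := k - 1) (by omega) (by omega)
    have hSO := diagonal_signFlip_mem_specialOrthogonalGroup (R := ℝ) (F := {i, j})
      (by rw [card_pair (ne_of_mem_of_not_mem his hjs)]; exact even_two)
    have hinvSO := hinv ⟨_, hSO⟩ fun t ht => diagonal_signFlip_mulVec_single
      (by simp only [mem_insert, mem_singleton, Fin.ext_iff]; omega)
    rw [show (diagonal (signFlip {i, j})).map Complex.ofReal = diagonal (signFlip {i, j}) from
      map_diagonal_signFlip Complex.ofRealHom _] at hinvSO
    exact ⟨signFlip {i, j}, prod_signFlip_pair his hjs, hinvSO⟩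
  · intro hmk
    let s₀ : Set.powersetCard (Fin (2 * m + 1)) m :=
      ⟨({t | (t : ℕ) < m} : Finset (Fin (2 * m + 1))), by
        simp [mem_iff, Fin.card_filter_val_lt]; omega⟩
    refine ⟨ιMulti_family ℂ m (Pi.basisFun ℂ _) s₀, ιMulti_range ℂ m (Set.mem_range_self _),
      ιMulti_family_basis_ne_zero _ _, fun g hg => map_ιMulti_family_eq_self fun t ht => ?_⟩
    rw [Matrix.toLin'_apply, Pi.basisFun_apply]
    exact map_mulVec_single_one_eq_self Complex.ofRealHom (hg t (by simp [s₀] at ht; omega))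

/-- **Invariants of `SO(n−k+1)` in `Λ^m ℂ^n`, `n = 2m+1`.**
For `n = 2m+1`, consider `Λ^m ℂ^n`, the irreducible representation of `SO(n)` with
highest weight `(1,…,1)` (`m` ones), where `g ∈ SO(n)` acts on the exterior power
through (the complexification of) its standard action on `ℂⁿ`.  Let
`SO(n−k+1) ⊆ SO(n)` be the standardly embedded subgroup fixing the first `k−1`
standard basis vectors.  Then `Λ^m ℂ^n` contains a nonzero `SO(n−k+1)`-invariant
vector if and only if `k > m`. -/
theorem exterior_power_invariants_iff (m k : ℕ) (hm : 0 < m) (hk : 0 < k) :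
    (∃ v : ExteriorAlgebra ℂ (Fin (2 * m + 1) → ℂ),
      v ∈ ⋀[ℂ]^m (Fin (2 * m + 1) → ℂ) ∧ v ≠ 0 ∧
      ∀ g : Matrix.specialOrthogonalGroup (Fin (2 * m + 1)) ℝ,
        (∀ i : Fin (2 * m + 1), (i : ℕ) < k - 1 →
          Matrix.mulVec (g : Matrix (Fin (2 * m + 1)) (Fin (2 * m + 1)) ℝ) (Pi.single i 1)
            = Pi.single i 1) →
        ExteriorAlgebra.map
          (Matrix.toLin'
            (((g : Matrix (Fin (2 * m + 1)) (Fin (2 * m + 1)) ℝ)).map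
              (Complex.ofReal : ℝ → ℂ))) v = v)
    ↔ m < k :=
  exterior_power_invariants_iff_general m k hm
end
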